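/- arXiv:math/0410124 — 9 statements merged into one kernel-verified Lean document; each statement's English description precedes it below -/
import Mathlib

section
/- The number of lattice paths from (0,0) to (2n,0) with steps (1,1) and (1,-1) having exactly 2k steps strictly below the x-axis equals the n-th Catalan number C_n, for every k with 0 ≤ k ≤ n (Chung–Feller theorem). -/
/-!
For `k < n`, a closed path with fewer than `2n` steps below the axis reaches height `1`, so it
factors as `N ↑ A ↓ B`, where `N ↑` ends at its first visit to height `1` and `A ↓` at the next
return to `0`. Then `N` never rises above the axis and `A` never dips below it, so `A ↓ N ↑ B`
is a closed path with exactly two more steps below the axis; reflecting in the axis shows that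
this exchange is invertible. Hence the number of `k`-negative paths does not depend on `k`.
Since the number of steps below the axis is always even, the `n + 1` classes `k = 0, …, n`
partition the `binom(2n, n)` closed paths, so each has `binom(2n, n) / (n + 1) = C_n` elements.
-/

/-- The value (+1 or -1) of a step: `true` is an up-step, `false` a down-step. -/
def stepVal (b : Bool) : ℤ := if b then 1 else -1

/-- Partial sum (height) after the first `p` steps. -/
def psum {m : ℕ} (f : Fin m → Bool) (p : ℕ) : ℤ :=
  (((List.ofFn f).take p).map stepVal).sum

/-- The set of steps of the path that lie below the x-axis:
step `i` goes from height `psum f i` to `psum f (i+1)`, and is below the axis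
iff the smaller of these two heights is negative. -/
def belowSteps {m : ℕ} (f : Fin m → Bool) : Finset (Fin m) :=
  Finset.univ.filter fun i => min (psum f i.1) (psum f (i.1 + 1)) < 0

open Finset

namespace ChungFeller

@[simp] lemma stepVal_true : stepVal true = 1 := rfl

@[simp] lemma stepVal_false : stepVal false = -1 := rfl

@[simp] lemma stepVal_not (b : Bool) : stepVal (!b) = -stepVal b := by
  cases b <;> rfl

def height (l : List Bool) : ℤ := (l.map stepVal).sum

@[simp] lemma height_nil : height [] = 0 := rfl

@[simp] lemma height_cons (b : Bool) (l : List Bool) :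
    height (b :: l) = stepVal b + height l := by
  simp [height]

@[simp] lemma height_append (l l' : List Bool) : height (l ++ l') = height l + height l' := by
  simp [height]

@[simp] lemma not_comp_not : (not ∘ not) = id := funext Bool.not_not

@[simp] lemma height_map_not (l : List Bool) : height (l.map not) = -height l := by
  induction l with
  | nil => rfl
  | cons b l ih => simp [ih]; ring

lemma height_take_succ {l : List Bool} {p : ℕ} (hp : p < l.length) :
    height (l.take (p + 1)) = height (l.take p) + stepVal l[p] := by
  rw [List.take_add_one, List.getElem?_eq_getElem hp, Option.toList_some, height_append,
    height_cons, height_nil, add_zero]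

def belowCount : ℤ → List Bool → ℕ
  | _, [] => 0
  | h, b :: l => (if min h (h + stepVal b) < 0 then 1 else 0) + belowCount (h + stepVal b) l

lemma belowCount_append (h : ℤ) (l l' : List Bool) :
    belowCount h (l ++ l') = belowCount h l + belowCount (h + height l) l' := by
  induction l generalizing h with
  | nil => simp [belowCount]
  | cons b l ih => simp [belowCount, ih, add_assoc]

lemma belowCount_le_length (h : ℤ) (l : List Bool) : belowCount h l ≤ l.length := by
  induction l generalizing h with
  | nil => rfl
  | cons b l ih =>
    have := ih (h + stepVal b)
    simp only [belowCount, List.length_cons]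
    split_ifs <;> omega

lemma belowCount_eq_zero {h : ℤ} {l : List Bool} (hl : ∀ p, 0 ≤ h + height (l.take p)) :
    belowCount h l = 0 := by
  induction l generalizing h with
  | nil => rfl
  | cons b l ih =>
    have hstep : 0 ≤ h ∧ 0 ≤ h + stepVal b := by simpa using And.intro (hl 0) (hl 1)
    have htail : belowCount (h + stepVal b) l = 0 := ih fun p => by
      simpa [add_assoc] using hl (p + 1)
    simp only [belowCount, htail]
    split_ifs <;> omega

lemma belowCount_eq_length {h : ℤ} {l : List Bool} (hl : ∀ p, h + height (l.take p) ≤ 0) :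
    belowCount h l = l.length := by
  induction l generalizing h with
  | nil => rfl
  | cons b l ih =>
    have hstep : h ≤ 0 ∧ h + stepVal b ≤ 0 := by simpa using And.intro (hl 0) (hl 1)
    have htail : belowCount (h + stepVal b) l = l.length := ih fun p => by
      simpa [add_assoc] using hl (p + 1)
    have hbelow : min h (h + stepVal b) < 0 := by
      cases b <;> simp only [stepVal] at hstep ⊢ <;> omega
    simp [belowCount, htail, hbelow, add_comm]

/- `max (-h) 0` is the depth below the axis: a step below the axis changes it by exactly one,
any other step keeps it at `0`. -/
lemma even_belowCount_add_max (h : ℤ) (l : List Bool) :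
    Even ((belowCount h l : ℤ) + max (-h) 0 + max (-(h + height l)) 0) := by
  induction l generalizing h with
  | nil => simp [belowCount, ← two_mul]
  | cons b l ih =>
    have ih := Int.even_iff.1 (ih (h + stepVal b))
    rw [Int.even_iff, belowCount, height_cons]
    push_cast
    generalize belowCount (h + stepVal b) l = c at ih ⊢
    cases b <;> simp only [stepVal_true, stepVal_false] at ih ⊢ <;> split_ifs <;> omega

lemma even_belowCount {l : List Bool} (hl : height l = 0) : Even (belowCount 0 l) := by
  simpa [hl] using even_belowCount_add_max 0 l

def IsDyck (l : List Bool) : Prop := height l = 0 ∧ ∀ p, 0 ≤ height (l.take p)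

lemma height_take_nonpos {l : List Bool} (hl : IsDyck (l.map not)) (p : ℕ) :
    height (l.take p) ≤ 0 := by
  simpa [← List.map_take] using hl.2 p

lemma belowCount_of_isDyck {h : ℤ} {A : List Bool} (hA : IsDyck A) (hh : 0 ≤ h) :
    belowCount h A = 0 :=
  belowCount_eq_zero fun p => by linarith [hA.2 p]

lemma belowCount_of_isDyck_map_not {h : ℤ} {N : List Bool} (hN : IsDyck (N.map not))
    (hh : h ≤ 0) :
    belowCount h N = N.length :=
  belowCount_eq_length fun p => by linarith [height_take_nonpos hN p]

lemma exists_first_rise {l : List Bool} (h : ∃ p, 0 < height (l.take p)) :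
    ∃ N t, IsDyck (N.map not) ∧ l = N ++ true :: t := by
  classical
  have hfind : Nat.find h ≠ 0 := fun h0 => by simpa [h0] using Nat.find_spec h
  obtain ⟨j, hj⟩ := Nat.exists_eq_add_one_of_ne_zero hfind
  have hpos : 0 < height (l.take (j + 1)) := hj ▸ Nat.find_spec h
  have hmin : ∀ q ≤ j, height (l.take q) ≤ 0 := fun q hq => not_lt.1 (Nat.find_min h (by omega))
  have hjl : j < l.length := by
    by_contra hjl
    have := hmin j le_rfl
    rw [List.take_of_length_le (by omega)] at this
    rw [List.take_of_length_le (by omega)] at hpos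
    omega
  have hj0 := hmin j le_rfl
  rw [height_take_succ hjl] at hpos
  have hup : l[j] = true := by
    by_contra hdown
    rw [Bool.not_eq_true] at hdown
    rw [hdown, stepVal_false] at hpos
    omega
  rw [hup, stepVal_true] at hpos
  refine ⟨l.take j, l.drop (j + 1), ⟨?_, fun q => ?_⟩, ?_⟩
  · rw [height_map_not]
    omega
  · simpa [← List.map_take, List.take_take] using hmin (min q j) (min_le_right _ _)
  · rw [← hup, ← List.drop_eq_getElem_cons hjl, List.take_append_drop]

lemma length_le_of_append_true_cons {N N' t s : List Bool} (hN : height N = 0)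
    (hN' : IsDyck (N'.map not)) (h : N ++ true :: t = N' ++ s) : N'.length ≤ N.length := by
  by_contra! hlt
  have hrise : height ((N ++ true :: t).take (N.length + 1)) = 1 := by
    simp [List.take_append, List.take_of_length_le, hN]
  rw [h, List.take_append_of_le_length (by omega)] at hrise
  have := height_take_nonpos hN' (N.length + 1)
  omega

lemma eq_of_append_true_cons {N N' t t' : List Bool} (hN : IsDyck (N.map not))
    (hN' : IsDyck (N'.map not)) (h : N ++ true :: t = N' ++ true :: t') : N = N' ∧ t = t' := by
  have hN0 : height N = 0 := by simpa using hN.1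
  have hN'0 : height N' = 0 := by simpa using hN'.1
  obtain ⟨hNN', htt'⟩ := List.append_inj h
    (le_antisymm (length_le_of_append_true_cons hN'0 hN h.symm)
      (length_le_of_append_true_cons hN0 hN' h))
  exact ⟨hNN', List.cons_injective htt'⟩

/- For `IsSplit (N, A, B)`, the path `rise (N, A, B) = N ↑ A ↓ B` has `N ↑` ending at its first
visit to height `1` and `A ↓` at the next return to `0`. -/
def rise : List Bool × List Bool × List Bool → List Bool
  | (N, A, B) => N ++ true :: (A ++ false :: B)

def fall : List Bool × List Bool × List Bool → List Bool
  | (N, A, B) => A ++ false :: (N ++ true :: B)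

def IsSplit : List Bool × List Bool × List Bool → Prop
  | (N, A, _) => IsDyck (N.map not) ∧ IsDyck A

lemma map_not_rise (N A B : List Bool) :
    (rise (N, A, B)).map not = fall (A.map not, N.map not, B.map not) := by
  simp [rise, fall]

lemma map_not_fall (N A B : List Bool) :
    (fall (N, A, B)).map not = rise (A.map not, N.map not, B.map not) := by
  simp [rise, fall]

lemma isSplit_map_not {N A B : List Bool} (h : IsSplit (N, A, B)) :
    IsSplit (A.map not, N.map not, B.map not) := by
  simpa [IsSplit, and_comm] using h

lemma length_fall (t : List Bool × List Bool × List Bool) :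
    (fall t).length = (rise t).length := by
  obtain ⟨N, A, B⟩ := t
  simp [rise, fall]
  omega

lemma height_fall (t : List Bool × List Bool × List Bool) :
    height (fall t) = height (rise t) := by
  obtain ⟨N, A, B⟩ := t
  simp [rise, fall]
  ring

lemma belowCount_fall {t : List Bool × List Bool × List Bool} (ht : IsSplit t) :
    belowCount 0 (fall t) = belowCount 0 (rise t) + 2 := by
  obtain ⟨N, A, B⟩ := t
  obtain ⟨hN, hA⟩ := ht
  have hN0 : height N = 0 := by simpa using hN.1
  simp [rise, fall, belowCount_append, belowCount, hA.1, hN0, belowCount_of_isDyck hA,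
    belowCount_of_isDyck_map_not hN]
  omega

lemma rise_injOn : Set.InjOn rise {t | IsSplit t} := by
  rintro ⟨N, A, B⟩ ht ⟨N', A', B'⟩ ht' h
  obtain ⟨rfl, hrest⟩ := eq_of_append_true_cons ht.1 ht'.1 h
  have hrest' := congrArg (List.map not) hrest
  simp only [List.map_append, List.map_cons, Bool.not_false] at hrest'
  obtain ⟨hA, hB⟩ := eq_of_append_true_cons (by simpa using ht.2) (by simpa using ht'.2) hrest'
  simp [List.map_injective_iff.2 Bool.not_injective hA,
    List.map_injective_iff.2 Bool.not_injective hB]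

lemma exists_rise_eq {l : List Bool} (hl : height l = 0)
    (hpos : ∃ p, 0 < height (l.take p)) : ∃ t, IsSplit t ∧ rise t = l := by
  obtain ⟨N, r, hN, rfl⟩ := exists_first_rise hpos
  have hr : height r = -1 := by
    have hN0 : height N = 0 := by simpa using hN.1
    simp only [height_append, height_cons, hN0, stepVal_true] at hl
    omega
  obtain ⟨A, B, hA, hAB⟩ :=
    exists_first_rise (l := r.map not)
      ⟨(r.map not).length, by rw [List.take_length, height_map_not, hr]; norm_num⟩
  refine ⟨(N, A.map not, B.map not), ⟨hN, hA⟩, ?_⟩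
  simpa [rise] using congrArg (List.map not) hAB.symm

lemma exists_rise_eq_of_belowCount_lt {l : List Bool} (hl : height l = 0)
    (hlt : belowCount 0 l < l.length) :
    ∃ t, IsSplit t ∧ rise t = l := by
  refine exists_rise_eq hl ?_
  by_contra! hle
  exact hlt.ne (belowCount_eq_length fun p => by simpa using hle p)

lemma exists_fall_eq_of_belowCount_pos {l : List Bool} (hl : height l = 0)
    (hpos : 0 < belowCount 0 l) :
    ∃ t, IsSplit t ∧ fall t = l := by
  have hneg : ∃ p, 0 < height ((l.map not).take p) := by
    by_contra! hle
    exact hpos.ne' (belowCount_eq_zero fun p => by simpa [← List.map_take] using hle p)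
  obtain ⟨⟨N, A, B⟩, ht, hrise⟩ := exists_rise_eq (by simp [hl]) hneg
  refine ⟨_, isSplit_map_not ht, ?_⟩
  simpa [map_not_rise] using congrArg (List.map not) hrise

open Classical in
noncomputable def exchange (l : List Bool) : List Bool :=
  if h : ∃ t, IsSplit t ∧ rise t = l then fall h.choose else l

/- Reflection in the axis turns `fall` into `rise` (`map_not_fall`), so conjugating `exchange` by
it inverts `exchange` on split paths. -/
noncomputable def unexchange (l : List Bool) : List Bool :=
  (exchange (l.map not)).map not

lemma length_exchange (l : List Bool) : (exchange l).length = l.length := by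
  unfold exchange
  split_ifs with h
  · rw [length_fall, h.choose_spec.2]
  · rfl

lemma length_unexchange (l : List Bool) : (unexchange l).length = l.length := by
  simp [unexchange, length_exchange]

lemma exchange_rise {t : List Bool × List Bool × List Bool} (ht : IsSplit t) :
    exchange (rise t) = fall t := by
  have h : ∃ t', IsSplit t' ∧ rise t' = rise t := ⟨t, ht, rfl⟩
  rw [exchange, dif_pos h]
  exact congrArg fall (rise_injOn h.choose_spec.1 ht h.choose_spec.2)

lemma unexchange_fall {t : List Bool × List Bool × List Bool} (ht : IsSplit t) :
    unexchange (fall t) = rise t := by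
  obtain ⟨N, A, B⟩ := t
  simp [unexchange, map_not_fall, exchange_rise (isSplit_map_not ht)]

section Transport

variable {α : Type*} {m : ℕ}

def liftFn (φ : List α → List α) (hφ : ∀ l, (φ l).length = l.length) (f : Fin m → α) :
    Fin m → α :=
  fun i => (φ (List.ofFn f))[i.1]'(by simp [hφ])

lemma ofFn_liftFn (φ : List α → List α) (hφ : ∀ l, (φ l).length = l.length) (f : Fin m → α) :
    List.ofFn (liftFn φ hφ f) = φ (List.ofFn f) :=
  List.ext_getElem (by simp [hφ]) fun _ _ _ => by simp [liftFn]

lemma card_filter_ofFn_eq [Fintype α] {P Q : List α → Prop} [DecidablePred P] [DecidablePred Q]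
    (φ ψ : List α → List α) (hφ : ∀ l, (φ l).length = l.length)
    (hψ : ∀ l, (ψ l).length = l.length)
    (hPQ : ∀ l, l.length = m → P l → Q (φ l) ∧ ψ (φ l) = l)
    (hQP : ∀ l, l.length = m → Q l → P (ψ l) ∧ φ (ψ l) = l) :
    #{f : Fin m → α | P (List.ofFn f)} = #{f : Fin m → α | Q (List.ofFn f)} := by
  refine card_nbij' (liftFn φ hφ) (liftFn ψ hψ) ?_ ?_ ?_ ?_ <;> intro f hf <;>
    simp only [coe_filter, mem_univ, true_and, Set.mem_ofPred_eq] at hf ⊢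
  · rw [ofFn_liftFn]
    exact (hPQ _ List.length_ofFn hf).1
  · rw [ofFn_liftFn]
    exact (hQP _ List.length_ofFn hf).1
  · apply List.ofFn_injective
    rw [ofFn_liftFn, ofFn_liftFn]
    exact (hPQ _ List.length_ofFn hf).2
  · apply List.ofFn_injective
    rw [ofFn_liftFn, ofFn_liftFn]
    exact (hQP _ List.length_ofFn hf).2

end Transport

lemma psum_eq_height {m : ℕ} (f : Fin m → Bool) : psum f m = height (List.ofFn f) := by
  rw [psum, List.take_of_length_le (by simp)]
  rfl

lemma psum_zero {m : ℕ} (f : Fin m → Bool) : psum f 0 = 0 := rfl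

lemma psum_succ {m : ℕ} (f : Fin (m + 1) → Bool) (p : ℕ) :
    psum f (p + 1) = stepVal (f 0) + psum (fun i => f i.succ) p := by
  simp [psum, List.ofFn_succ]

lemma card_filter_below_eq_belowCount {m : ℕ} (h : ℤ) (f : Fin m → Bool) :
    #{i : Fin m | min (h + psum f i) (h + psum f (i + 1)) < 0} =
      belowCount h (List.ofFn f) := by
  induction m generalizing h with
  | zero => simp [belowCount]
  | succ m ih =>
    rw [List.ofFn_succ, belowCount, ← ih, card_filter, card_filter, Fin.sum_univ_succ]
    simp only [Fin.val_zero, Fin.val_succ, psum_zero, psum_succ, ← add_assoc, add_zero]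

lemma card_belowSteps {m : ℕ} (f : Fin m → Bool) :
    #(belowSteps f) = belowCount 0 (List.ofFn f) := by
  simpa [belowSteps] using card_filter_below_eq_belowCount 0 f

lemma height_ofFn {m : ℕ} (f : Fin m → Bool) : height (List.ofFn f) = 2 * #{i | f i} - m := by
  have hstep : ∀ b : Bool, stepVal b = 2 * (if b then 1 else 0) - 1 := by decide
  simp only [height, List.map_ofFn, List.sum_ofFn, Function.comp_apply, hstep, sum_sub_distrib,
    ← mul_sum, sum_boole, sum_const, card_univ, Fintype.card_fin]
  simp

lemma card_filter_card_eq_choose {α : Type*} [Fintype α] [DecidableEq α] (j : ℕ) :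
    #{f : α → Bool | #{i | f i} = j} = (Fintype.card α).choose j := by
  rw [← card_univ, ← card_powersetCard]
  refine card_nbij' (fun f => ({i | f i} : Finset α)) (fun s i => decide (i ∈ s))
    ?_ ?_ ?_ ?_ <;> intro _ _ <;> simp_all [mem_powersetCard]

def negPaths (n k : ℕ) : Finset (Fin (2 * n) → Bool) :=
  (Finset.univ : Finset (Fin (2 * n) → Bool)).filter fun f =>
    psum f (2 * n) = 0 ∧ (belowSteps f).card = 2 * k

lemma negPaths_eq_filter_ofFn (n k : ℕ) :
    negPaths n k =
      ({f | height (List.ofFn f) = 0 ∧ belowCount 0 (List.ofFn f) = 2 * k} :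
        Finset (Fin (2 * n) → Bool)) := by
  ext f
  simp [negPaths, psum_eq_height, card_belowSteps]

lemma card_negPaths_succ {n k : ℕ} (hk : k < n) : #(negPaths n k) = #(negPaths n (k + 1)) := by
  rw [negPaths_eq_filter_ofFn, negPaths_eq_filter_ofFn]
  refine card_filter_ofFn_eq (P := fun l => height l = 0 ∧ belowCount 0 l = 2 * k)
    (Q := fun l => height l = 0 ∧ belowCount 0 l = 2 * (k + 1))
    exchange unexchange length_exchange length_unexchange ?_ ?_
  · rintro l hlen ⟨hl, hcount⟩
    obtain ⟨t, ht, rfl⟩ := exists_rise_eq_of_belowCount_lt hl (by omega)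
    rw [exchange_rise ht, unexchange_fall ht, height_fall, belowCount_fall ht]
    exact ⟨⟨hl, by omega⟩, rfl⟩
  · rintro l - ⟨hl, hcount⟩
    obtain ⟨t, ht, rfl⟩ := exists_fall_eq_of_belowCount_pos hl (by omega)
    rw [unexchange_fall ht, exchange_rise ht, ← height_fall]
    exact ⟨⟨hl, by rw [belowCount_fall ht] at hcount; omega⟩, rfl⟩

lemma card_negPaths_eq_card_negPaths_zero {n k : ℕ} (hk : k ≤ n) :
    #(negPaths n k) = #(negPaths n 0) := by
  induction k with
  | zero => rfl
  | succ k ih => rw [← card_negPaths_succ (by omega), ih (by omega)]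

lemma card_filter_height_ofFn_eq_zero (n : ℕ) :
    #{f : Fin (2 * n) → Bool | height (List.ofFn f) = 0} = n.centralBinom := by
  have hclosed (f : Fin (2 * n) → Bool) : height (List.ofFn f) = 0 ↔ #{i | f i} = n := by
    rw [height_ofFn]
    omega
  simp_rw [hclosed, card_filter_card_eq_choose, Fintype.card_fin, Nat.centralBinom]

lemma sum_card_negPaths (n : ℕ) : ∑ k ∈ range (n + 1), #(negPaths n k) = n.centralBinom := by
  rw [← card_filter_height_ofFn_eq_zero,
    card_eq_sum_card_fiberwise (f := fun f => belowCount 0 (List.ofFn f) / 2) (t := range (n + 1))]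
  · refine sum_congr rfl fun k _ => congrArg card ?_
    ext f
    simp only [negPaths_eq_filter_ofFn, mem_filter, mem_univ, true_and]
    constructor
    · rintro ⟨hl, hcount⟩
      exact ⟨hl, by omega⟩
    · rintro ⟨hl, hcount⟩
      obtain ⟨r, hr⟩ := even_belowCount hl
      exact ⟨hl, by omega⟩
  · intro f _
    have := belowCount_le_length 0 (List.ofFn f)
    simp only [List.length_ofFn, coe_range, Set.mem_Iio] at this ⊢
    omega

lemma card_negPaths_zero (n : ℕ) : #(negPaths n 0) = catalan n := by
  refine Nat.eq_of_mul_eq_mul_left n.succ_pos ?_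
  rw [succ_mul_catalan_eq_centralBinom, ← sum_card_negPaths,
    sum_congr rfl fun j hj =>
      card_negPaths_eq_card_negPaths_zero (Nat.lt_succ_iff.1 (mem_range.1 hj))]
  simp

end ChungFeller

/-- **Chung–Feller theorem**: the number of paths from (0,0) to (2n,0) with steps
(1,1), (1,-1) having exactly 2k steps strictly below the x-axis is the n-th
Catalan number, for every 0 ≤ k ≤ n. -/
theorem chung_feller (n k : ℕ) (hk : k ≤ n) :
    ((Finset.univ : Finset (Fin (2 * n) → Bool)).filter fun f =>
        psum f (2 * n) = 0 ∧ (belowSteps f).card = 2 * k).card = catalan n :=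
  (ChungFeller.card_negPaths_eq_card_negPaths_zero hk).trans
    (ChungFeller.card_negPaths_zero n)
end

section
/- Every nonempty k-negative path of length 2n factors uniquely as either (i) an up-step, followed by a Dyck path of length 2p−2, a down-step, and a k-negative path of length 2n−2p for some 1 ≤ p ≤ n−k, or (ii) a down-step, followed by a negative Dyck path of length 2q−2, an up-step, and a (k−q)-negative path of length 2n−2q for some 1 ≤ q ≤ k. -/
/-- A sequence of ±1 steps. -/
def IsStepSeq (s : List ℤ) : Prop := ∀ a ∈ s, a = 1 ∨ a = -1

/-- Height after the first `p` steps. -/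
def psumL (s : List ℤ) (p : ℕ) : ℤ := (s.take p).sum

/-- A Dyck path: ±1 steps, ends at height 0, never goes below the x-axis. -/
def IsDyck (s : List ℤ) : Prop := IsStepSeq s ∧ s.sum = 0 ∧ ∀ p, 0 ≤ psumL s p

/-- A negative Dyck path: ±1 steps, ends at height 0, never goes above the x-axis. -/
def IsNegDyck (s : List ℤ) : Prop := IsStepSeq s ∧ s.sum = 0 ∧ ∀ p, psumL s p ≤ 0

/-- Number of steps below the x-axis (step `i` goes from `psumL s i` to `psumL s (i+1)`). -/
def belowCountL (s : List ℤ) : ℕ :=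
  ((Finset.range s.length).filter fun i => min (psumL s i) (psumL s (i + 1)) < 0).card

/-- A k-negative path of length 2n: from (0,0) to (2n,0) with exactly 2k steps below the axis. -/
def IsKNeg (n k : ℕ) (s : List ℤ) : Prop :=
  IsStepSeq s ∧ s.length = 2 * n ∧ s.sum = 0 ∧ belowCountL s = 2 * k

/-!
Cut the path at its first return to the axis. If the first step is up, the piece before the
return is an up step, a Dyck path and a down step, none of whose steps lie below the axis; if
it is down, the piece is a down step, a negative Dyck path and an up step, all of whose steps
lie below the axis. Since the piece ends on the axis, the below-axis steps of the whole path are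
those of the piece plus those of the rest, and the cut is unique because a Dyck path (negative
Dyck path) never reaches the level of the closing down (up) step.
-/

@[simp]
lemma psumL_zero (s : List ℤ) : psumL s 0 = 0 := rfl

@[simp]
lemma psumL_cons_succ (a : ℤ) (t : List ℤ) (m : ℕ) :
    psumL (a :: t) (m + 1) = a + psumL t m := by
  simp [psumL]

lemma psumL_of_length_le {s : List ℤ} {m : ℕ} (h : s.length ≤ m) : psumL s m = s.sum := by
  rw [psumL, List.take_of_length_le h]

lemma psumL_append (u v : List ℤ) (m : ℕ) :
    psumL (u ++ v) m = psumL u m + psumL v (m - u.length) := by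
  simp [psumL, List.take_append]

lemma psumL_append_of_le {u : List ℤ} (v : List ℤ) {m : ℕ} (h : m ≤ u.length) :
    psumL (u ++ v) m = psumL u m := by
  simp [psumL_append, Nat.sub_eq_zero_of_le h]

lemma psumL_append_length_add {u : List ℤ} (v : List ℤ) (hu : u.sum = 0) (m : ℕ) :
    psumL (u ++ v) (u.length + m) = psumL v m := by
  simp [psumL_append, psumL_of_length_le, hu]

lemma sum_map_neg (s : List ℤ) : (s.map Neg.neg).sum = -s.sum := (List.sum_neg s).symm

lemma psumL_map_neg (s : List ℤ) (m : ℕ) : psumL (s.map Neg.neg) m = -psumL s m := by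
  rw [psumL, ← List.map_take, sum_map_neg, psumL]

lemma isStepSeq_cons {a : ℤ} {t : List ℤ} :
    IsStepSeq (a :: t) ↔ (a = 1 ∨ a = -1) ∧ IsStepSeq t :=
  List.forall_mem_cons

lemma isStepSeq_append {u v : List ℤ} : IsStepSeq (u ++ v) ↔ IsStepSeq u ∧ IsStepSeq v :=
  List.forall_mem_append

lemma IsStepSeq.mono {s t : List ℤ} (hs : IsStepSeq s) (h : t ⊆ s) : IsStepSeq t :=
  fun a ha => hs a (h ha)

lemma IsStepSeq.map_neg {s : List ℤ} (hs : IsStepSeq s) : IsStepSeq (s.map Neg.neg) := by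
  simp only [IsStepSeq, List.mem_map]
  rintro _ ⟨a, ha, rfl⟩
  rcases hs a ha with rfl | rfl <;> simp

lemma IsStepSeq.even_length_add_sum {s : List ℤ} (hs : IsStepSeq s) :
    Even ((s.length : ℤ) + s.sum) := by
  induction s with
  | nil => simp
  | cons a t ih =>
    obtain ⟨ha, ht⟩ := isStepSeq_cons.1 hs
    obtain ⟨c, hc⟩ := ih ht
    refine ⟨c + (1 + a) / 2, ?_⟩
    rcases ha with rfl | rfl <;> simp <;> omega

lemma IsStepSeq.even_length {s : List ℤ} (hs : IsStepSeq s) (h0 : s.sum = 0) : Even s.length := by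
  simpa [h0] using hs.even_length_add_sum

lemma IsDyck.nil : IsDyck [] := ⟨by simp [IsStepSeq], rfl, fun _ => by simp [psumL]⟩

lemma IsDyck.append {u v : List ℤ} (hu : IsDyck u) (hv : IsDyck v) : IsDyck (u ++ v) := by
  refine ⟨isStepSeq_append.2 ⟨hu.1, hv.1⟩, by simp [hu.2.1, hv.2.1], fun m => ?_⟩
  rw [psumL_append]
  rcases le_total m u.length with h | h
  · simpa [Nat.sub_eq_zero_of_le h] using hu.2.2 m
  · simpa [psumL_of_length_le h, hu.2.1] using hv.2.2 _

lemma IsDyck.lift {Q : List ℤ} (hQ : IsDyck Q) : IsDyck (1 :: (Q ++ [-1])) := by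
  refine ⟨isStepSeq_cons.2 ⟨.inl rfl, isStepSeq_append.2 ⟨hQ.1, by simp [IsStepSeq]⟩⟩,
    by simp [hQ.2.1], fun m => ?_⟩
  rcases m with _ | m
  · simp
  rw [psumL_cons_succ]
  rcases le_or_gt m Q.length with h | h
  · linarith [psumL_append_of_le [-1] h, hQ.2.2 m]
  · simp [psumL_of_length_le (show (Q ++ [-1]).length ≤ m by simpa), hQ.2.1]

lemma isNegDyck_iff_isDyck_map_neg {s : List ℤ} : IsNegDyck s ↔ IsDyck (s.map Neg.neg) := by
  refine ⟨fun h => ⟨h.1.map_neg, by simp [sum_map_neg, h.2.1], fun m => ?_⟩,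
    fun h => ⟨by simpa using h.1.map_neg, by simpa [sum_map_neg] using h.2.1, fun m => ?_⟩⟩
  · linarith [psumL_map_neg s m, h.2.2 m]
  · linarith [psumL_map_neg s m, h.2.2 m]

lemma exists_isDyck_append_cons_of_sum_neg {t : List ℤ} (ht : IsStepSeq t) (hsum : t.sum < 0) :
    ∃ Q R, IsDyck Q ∧ t = Q ++ -1 :: R := by
  induction h : t.length using Nat.strong_induction_on generalizing t with
  | _ len ih =>
  cases t with
  | nil => simp at hsum
  | cons a t' =>
  obtain ⟨ha | rfl, ht'⟩ := isStepSeq_cons.1 ht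
  · subst ha
    simp only [List.sum_cons, List.length_cons] at hsum h
    -- `t'` first drops below its start after `Q₁`, and then `R₁` does so after `Q₂`.
    obtain ⟨Q₁, R₁, hQ₁, rfl⟩ := ih t'.length (by omega) ht' (by omega) rfl
    obtain ⟨Q₂, R, hQ₂, rfl⟩ := ih R₁.length (by simp at h; omega)
      (ht'.mono fun _ hx => by simp [hx]) (by simp [hQ₁.2.1] at hsum; omega) rfl
    exact ⟨1 :: (Q₁ ++ [-1]) ++ Q₂, R, hQ₁.lift.append hQ₂, by simp⟩
  · exact ⟨[], t', .nil, rfl⟩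

lemma exists_isNegDyck_append_cons_of_sum_pos {t : List ℤ} (ht : IsStepSeq t) (hsum : 0 < t.sum) :
    ∃ Q R, IsNegDyck Q ∧ t = Q ++ 1 :: R := by
  obtain ⟨Q, R, hQ, hQR⟩ := exists_isDyck_append_cons_of_sum_neg ht.map_neg
    (by simpa [sum_map_neg] using hsum)
  refine ⟨Q.map Neg.neg, R.map Neg.neg, isNegDyck_iff_isDyck_map_neg.2 (by simpa using hQ), ?_⟩
  simpa using congrArg (List.map Neg.neg) hQR

lemma IsDyck.length_le_of_append_cons_eq {Q₁ Q₂ R₁ R₂ : List ℤ} (hQ₁ : IsDyck Q₁)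
    (hQ₂ : IsDyck Q₂) (h : Q₁ ++ -1 :: R₁ = Q₂ ++ -1 :: R₂) :
    Q₁.length ≤ Q₂.length := by
  by_contra! hlt
  have h₂ : psumL (Q₂ ++ -1 :: R₂) (Q₂.length + 1) = -1 := by
    simp [psumL_append_length_add _ hQ₂.2.1]
  rw [← h, psumL_append_of_le _ (by omega)] at h₂
  linarith [hQ₁.2.2 (Q₂.length + 1)]

lemma IsDyck.eq_of_append_cons_eq {Q₁ Q₂ R₁ R₂ : List ℤ} (hQ₁ : IsDyck Q₁)
    (hQ₂ : IsDyck Q₂) (h : Q₁ ++ -1 :: R₁ = Q₂ ++ -1 :: R₂) :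
    Q₁ = Q₂ ∧ R₁ = R₂ := by
  have hlen := (hQ₁.length_le_of_append_cons_eq hQ₂ h).antisymm
    (hQ₂.length_le_of_append_cons_eq hQ₁ h.symm)
  obtain ⟨hQ, hR⟩ := List.append_inj h hlen
  exact ⟨hQ, List.cons_injective hR⟩

lemma IsNegDyck.eq_of_append_cons_eq {Q₁ Q₂ R₁ R₂ : List ℤ} (hQ₁ : IsNegDyck Q₁)
    (hQ₂ : IsNegDyck Q₂) (h : Q₁ ++ 1 :: R₁ = Q₂ ++ 1 :: R₂) :
    Q₁ = Q₂ ∧ R₁ = R₂ := by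
  have hneg := IsDyck.eq_of_append_cons_eq (isNegDyck_iff_isDyck_map_neg.1 hQ₁)
    (isNegDyck_iff_isDyck_map_neg.1 hQ₂) (by simpa using congrArg (List.map Neg.neg) h)
  exact ⟨List.map_injective_iff.2 neg_injective hneg.1,
    List.map_injective_iff.2 neg_injective hneg.2⟩

lemma belowCountL_le_length (s : List ℤ) : belowCountL s ≤ s.length :=
  (Finset.card_filter_le _ _).trans (Finset.card_range _).le

lemma belowCountL_eq_zero {s : List ℤ} (h : ∀ m, 0 ≤ psumL s m) : belowCountL s = 0 := by
  rw [belowCountL, Finset.card_eq_zero, Finset.filter_eq_empty_iff]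
  exact fun i _ => not_lt.2 (le_min (h i) (h (i + 1)))

lemma belowCountL_eq_length {s : List ℤ}
    (h : ∀ i < s.length, min (psumL s i) (psumL s (i + 1)) < 0) : belowCountL s = s.length := by
  rw [belowCountL, Finset.filter_true_of_mem fun i hi => h i (Finset.mem_range.1 hi),
    Finset.card_range]

lemma belowCountL_append {u : List ℤ} (v : List ℤ) (hu : u.sum = 0) :
    belowCountL (u ++ v) = belowCountL u + belowCountL v := by
  simp only [belowCountL, Finset.card_filter, List.length_append, Finset.sum_range_add]
  congr 1
  · refine Finset.sum_congr rfl fun i hi => ?_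
    rw [Finset.mem_range] at hi
    rw [psumL_append_of_le v hi.le, psumL_append_of_le v hi]
  · refine Finset.sum_congr rfl fun i _ => ?_
    rw [psumL_append_length_add v hu, add_assoc, psumL_append_length_add v hu]

lemma belowCountL_up_block {Q : List ℤ} (hQ : IsDyck Q) (R : List ℤ) :
    belowCountL (1 :: (Q ++ -1 :: R)) = belowCountL R := by
  have hB := hQ.lift
  rw [show 1 :: (Q ++ -1 :: R) = 1 :: (Q ++ [-1]) ++ R by simp, belowCountL_append R hB.2.1,
    belowCountL_eq_zero hB.2.2, zero_add]

lemma belowCountL_down_block {Q : List ℤ} (hQ : IsNegDyck Q) (R : List ℤ) :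
    belowCountL (-1 :: (Q ++ 1 :: R)) = Q.length + 2 + belowCountL R := by
  set B : List ℤ := -1 :: (Q ++ [1])
  have hB_neg : ∀ m ≤ Q.length, psumL B (m + 1) < 0 := fun m hm => by
    simp only [B, psumL_cons_succ, psumL_append_of_le _ hm]
    linarith [hQ.2.2 m]
  have hB_below : ∀ i < B.length, min (psumL B i) (psumL B (i + 1)) < 0 := by
    rintro (_ | i) hi
    · exact min_lt_of_right_lt (hB_neg 0 (Nat.zero_le _))
    · exact min_lt_of_left_lt (hB_neg i (by simpa [B] using hi))
  rw [show -1 :: (Q ++ 1 :: R) = B ++ R by simp [B], belowCountL_append R (by simp [B, hQ.2.1]),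
    belowCountL_eq_length hB_below]
  simp [B]

lemma IsKNeg.of_up_block {n k : ℕ} {Q R : List ℤ} (hQ : IsDyck Q)
    (h : IsKNeg n k (1 :: (Q ++ -1 :: R))) :
    ∃ p, 1 ≤ p ∧ p ≤ n - k ∧ Q.length = 2 * p - 2 ∧ IsKNeg (n - p) k R := by
  obtain ⟨hstep, hlen, hsum, hbelow⟩ := h
  obtain ⟨c, hc⟩ := hQ.1.even_length hQ.2.1
  have hR := belowCountL_le_length R
  rw [belowCountL_up_block hQ] at hbelow
  simp only [List.length_cons, List.length_append, List.sum_cons, List.sum_append, hQ.2.1]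
    at hlen hsum
  refine ⟨c + 1, by omega, by omega, by omega,
    hstep.mono fun _ hx => by simp [hx], by omega, by omega, hbelow⟩

lemma IsKNeg.of_down_block {n k : ℕ} {Q R : List ℤ} (hQ : IsNegDyck Q)
    (h : IsKNeg n k (-1 :: (Q ++ 1 :: R))) :
    ∃ q, 1 ≤ q ∧ q ≤ k ∧ Q.length = 2 * q - 2 ∧ IsKNeg (n - q) (k - q) R := by
  obtain ⟨hstep, hlen, hsum, hbelow⟩ := h
  obtain ⟨c, hc⟩ := hQ.1.even_length hQ.2.1
  have hR := belowCountL_le_length R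
  rw [belowCountL_down_block hQ] at hbelow
  simp only [List.length_cons, List.length_append, List.sum_cons, List.sum_append, hQ.2.1]
    at hlen hsum
  refine ⟨c + 1, by omega, by omega, by omega,
    hstep.mono fun _ hx => by simp [hx], by omega, by omega, by omega⟩

theorem kNeg_prime_factorization_general (n k : ℕ) (hn : 1 ≤ n)
    (s : List ℤ) (hs : IsKNeg n k s) :
    ∃! QR : List ℤ × List ℤ,
      (∃ p : ℕ, 1 ≤ p ∧ p ≤ n - k ∧ IsDyck QR.1 ∧ QR.1.length = 2 * p - 2 ∧
        IsKNeg (n - p) k QR.2 ∧ s = 1 :: (QR.1 ++ (-1) :: QR.2)) ∨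
      (∃ q : ℕ, 1 ≤ q ∧ q ≤ k ∧ IsNegDyck QR.1 ∧ QR.1.length = 2 * q - 2 ∧
        IsKNeg (n - q) (k - q) QR.2 ∧ s = (-1) :: (QR.1 ++ 1 :: QR.2)) := by
  obtain ⟨a, t, rfl⟩ : ∃ a t, s = a :: t :=
    List.exists_cons_of_ne_nil fun hs₀ => by simp [hs₀, IsKNeg] at hs; omega
  have hsum : a + t.sum = 0 := by simpa using hs.2.2.1
  obtain ⟨rfl | rfl, ht⟩ := isStepSeq_cons.1 hs.1
  · obtain ⟨Q, R, hQ, rfl⟩ := exists_isDyck_append_cons_of_sum_neg ht (by omega)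
    obtain ⟨p, hp₁, hpk, hQlen, hR⟩ := hs.of_up_block hQ
    refine ⟨(Q, R), .inl ⟨p, hp₁, hpk, hQ, hQlen, hR, rfl⟩, ?_⟩
    rintro ⟨Q', R'⟩ (⟨-, -, -, hQ', -, -, h⟩ | ⟨-, -, -, -, -, -, h⟩)
    · exact Prod.ext_iff.2 (hQ'.eq_of_append_cons_eq hQ (List.cons_injective h.symm))
    · simp at h
  · obtain ⟨Q, R, hQ, rfl⟩ := exists_isNegDyck_append_cons_of_sum_pos ht (by omega)
    obtain ⟨q, hq₁, hqk, hQlen, hR⟩ := hs.of_down_block hQ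
    refine ⟨(Q, R), .inr ⟨q, hq₁, hqk, hQ, hQlen, hR, rfl⟩, ?_⟩
    rintro ⟨Q', R'⟩ (⟨-, -, -, -, -, -, h⟩ | ⟨-, -, -, hQ', -, -, h⟩)
    · simp at h
    · exact Prod.ext_iff.2 (hQ'.eq_of_append_cons_eq hQ (List.cons_injective h.symm))

/-- Every nonempty k-negative path of length 2n factors uniquely as either
(i) an up-step, a Dyck path of length 2p−2, a down-step, and a k-negative path of
length 2n−2p for some 1 ≤ p ≤ n−k, or (ii) a down-step, a negative Dyck path of
length 2q−2, an up-step, and a (k−q)-negative path of length 2n−2q for some 1 ≤ q ≤ k. -/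
theorem kNeg_prime_factorization (n k : ℕ) (hn : 1 ≤ n) (hk : k ≤ n)
    (s : List ℤ) (hs : IsKNeg n k s) :
    ∃! QR : List ℤ × List ℤ,
      (∃ p : ℕ, 1 ≤ p ∧ p ≤ n - k ∧ IsDyck QR.1 ∧ QR.1.length = 2 * p - 2 ∧
        IsKNeg (n - p) k QR.2 ∧ s = 1 :: (QR.1 ++ (-1) :: QR.2)) ∨
      (∃ q : ℕ, 1 ≤ q ∧ q ≤ k ∧ IsNegDyck QR.1 ∧ QR.1.length = 2 * q - 2 ∧
        IsKNeg (n - q) (k - q) QR.2 ∧ s = (-1) :: (QR.1 ++ 1 :: QR.2)) :=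
  kNeg_prime_factorization_general n k hn s hs
end

section
/- For all n ≥ 1 and 0 ≤ k ≤ n, assuming inductively that N(m,l) = C_m for all m < n and 0 ≤ l ≤ m, the number N(n,k) of k-negative paths of length 2n satisfies N(n,k) = Σ_{p=1}^{n−k} C_{p−1} C_{n−p} + Σ_{q=1}^{k} C_{q−1} C_{n−q}. -/
/-- `Npaths n k` is the number of k-negative paths of length 2n. -/
def Npaths (n k : ℕ) : ℕ :=
  ((Finset.univ : Finset (Fin (2 * n) → Bool)).filter fun f =>
      psum f (2 * n) = 0 ∧ (belowSteps f).card = 2 * k).card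

namespace CF

def steps (l : List Bool) : ℤ := (l.map stepVal).sum

def cnt : ℤ → List Bool → ℕ
  | _, [] => 0
  | h, b :: t => (if min h (h + stepVal b) < 0 then 1 else 0) + cnt (h + stepVal b) t

@[simp] lemma steps_nil : steps [] = 0 := rfl
@[simp] lemma steps_cons (b : Bool) (t : List Bool) : steps (b :: t) = stepVal b + steps t := rfl
@[simp] lemma steps_append (l₁ l₂ : List Bool) : steps (l₁ ++ l₂) = steps l₁ + steps l₂ := by
  simp [steps]

@[simp] lemma cnt_nil (h : ℤ) : cnt h [] = 0 := rfl
lemma cnt_cons (h : ℤ) (b : Bool) (t : List Bool) :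
    cnt h (b :: t) = (if min h (h + stepVal b) < 0 then 1 else 0) + cnt (h + stepVal b) t := rfl

lemma cnt_append (h : ℤ) (l₁ l₂ : List Bool) :
    cnt h (l₁ ++ l₂) = cnt h l₁ + cnt (h + steps l₁) l₂ := by
  induction l₁ generalizing h with
  | nil => simp
  | cons b t ihl => simp [cnt_cons, ihl, add_assoc]

lemma cnt_le_length (h : ℤ) (l : List Bool) : cnt h l ≤ l.length := by
  induction l generalizing h with
  | nil => simp
  | cons b t ihl =>
    simp only [cnt_cons, List.length_cons]
    have := ihl (h + stepVal b)
    split <;> omega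

lemma stepVal_eq_or (b : Bool) : stepVal b = 1 ∨ stepVal b = -1 := by
  cases b <;> simp [stepVal]

lemma even_steps_add_length (l : List Bool) : Even (steps l + l.length) := by
  induction l with
  | nil => simp
  | cons b t ihl =>
    rcases ihl with ⟨c, hc⟩
    rcases stepVal_eq_or b with h | h
    · exact ⟨c + 1, by simp [h]; push_cast; omega⟩
    · exact ⟨c, by simp [h]; push_cast; omega⟩

lemma steps_take_succ (l : List Bool) (t : ℕ) (ht : t < l.length) :
    steps (l.take (t + 1)) = steps (l.take t) + stepVal (l[t]!) := by
  rw [List.take_succ]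
  rw [getElem!_pos l t ht]
  simp only [List.getElem?_eq_getElem ht, steps, List.map_append, List.sum_append]
  simp

lemma cnt_eq_sum (l : List Bool) (h : ℤ) :
    cnt h l = ∑ i ∈ Finset.range l.length,
      if min (h + steps (l.take i)) (h + steps (l.take (i + 1))) < 0 then 1 else 0 := by
  induction l generalizing h with
  | nil => simp
  | cons b t ihl =>
    rw [List.length_cons, Finset.sum_range_succ']
    simp only [List.take_succ_cons, List.take_zero, steps_cons, steps_nil, add_zero]
    rw [cnt_cons, ihl (h + stepVal b), add_comm]
    congr 1
    apply Finset.sum_congr rfl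
    intro i _
    congr 2 <;> ring

lemma cnt_eq_zero_iff {h : ℤ} (hh : 0 ≤ h) (l : List Bool) :
    cnt h l = 0 ↔ ∀ j, 0 ≤ h + steps (l.take j) := by
  induction l generalizing h with
  | nil => simp [hh, le_trans hh]
  | cons b t ihl =>
    rw [cnt_cons]
    by_cases hs : 0 ≤ h + stepVal b
    · have hmin : ¬ (min h (h + stepVal b) < 0) := by omega
      rw [if_neg hmin, zero_add, ihl hs]
      constructor
      · intro H j
        cases j with
        | zero => simpa using hh
        | succ j => simpa [add_assoc] using H j
      · intro H j
        simpa [add_assoc] using H (j + 1)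
    · have hmin : min h (h + stepVal b) < 0 := by omega
      rw [if_pos hmin]
      constructor
      · omega
      · intro H
        exact absurd (by simpa using H 1) (by omega)

lemma cnt_eq_length {h : ℤ} (l : List Bool)
    (H : ∀ j < l.length, min (h + steps (l.take j)) (h + steps (l.take (j + 1))) < 0) :
    cnt h l = l.length := by
  induction l generalizing h with
  | nil => simp
  | cons b t ihl =>
    rw [cnt_cons]
    have h0 := H 0 (by simp)
    simp only [List.take_succ_cons, List.take_zero, steps_nil, steps_cons, add_zero] at h0
    rw [if_pos h0, ihl]
    · simp [Nat.add_comm]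
    · intro j hj
      have := H (j + 1) (by simpa using hj)
      simpa [add_assoc] using this

/-- If the partial sums are nonzero on `[1, J]` and the first one is positive,
all are positive. -/
lemma pos_of_first_pos (l : List Bool) (J : ℕ) (hJ : J ≤ l.length)
    (hne : ∀ t, 1 ≤ t → t ≤ J → steps (l.take t) ≠ 0)
    (h1 : steps (l.take 1) = 1) :
    ∀ t, 1 ≤ t → t ≤ J → 0 < steps (l.take t) := by
  intro t
  induction t with
  | zero => omega
  | succ t iht =>
    intro _ htJ
    rcases Nat.eq_or_lt_of_le (Nat.one_le_iff_ne_zero.mpr (by omega) : 1 ≤ t + 1) with h | h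
    · rw [← h, h1]; norm_num
    · have ht1 : 1 ≤ t := by omega
      have hpos := iht ht1 (by omega)
      have hstep := steps_take_succ l t (by omega)
      have := hne (t + 1) (by omega) htJ
      rcases stepVal_eq_or (l[t]!) with hb | hb <;> omega

@[simp] lemma stepVal_not (b : Bool) : stepVal (!b) = - stepVal b := by cases b <;> simp [stepVal]

@[simp] lemma steps_map_not (l : List Bool) : steps (l.map not) = - steps l := by
  induction l with
  | nil => simp
  | cons b t ihl => simp [ihl]; ring

/-- First return time: the least `t` which is `l.length` or a positive return to 0. -/
def frP (l : List Bool) (t : ℕ) : Prop := t = l.length ∨ (1 ≤ t ∧ steps (l.take t) = 0)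

instance (l : List Bool) : DecidablePred (frP l) := fun _ => inferInstanceAs (Decidable (_ ∨ _))

lemma frP_ex (l : List Bool) : ∃ t, frP l t := ⟨l.length, Or.inl rfl⟩

def fr (l : List Bool) : ℕ := Nat.find (frP_ex l)

lemma fr_eq_iff (l : List Bool) (m : ℕ) :
    fr l = m ↔ frP l m ∧ ∀ t < m, ¬ frP l t := Nat.find_eq_iff _

/-- The list-level path subtype. -/
def PathsL (m k : ℕ) : Type := {l : List Bool // l.length = 2 * m ∧ steps l = 0 ∧ cnt 0 l = 2 * k}

def funListEquiv (m : ℕ) (P : List Bool → Prop) :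
    {f : Fin m → Bool // P (List.ofFn f)} ≃ {l : List Bool // l.length = m ∧ P l} where
  toFun f := ⟨List.ofFn f.1, by simp, f.2⟩
  invFun l := ⟨fun i => l.1.get (Fin.cast l.2.1.symm i), by
    have : List.ofFn (fun i => l.1.get (Fin.cast l.2.1.symm i)) = l.1 := by
      apply List.ext_getElem
      · simp [l.2.1]
      · simp
    rw [this]; exact l.2.2⟩
  left_inv f := by ext i; simp
  right_inv l := by
    apply Subtype.ext
    apply List.ext_getElem
    · simp [l.2.1]
    · simp

lemma psum_eq (m : ℕ) (f : Fin m → Bool) (p : ℕ) : psum f p = steps ((List.ofFn f).take p) := rfl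

lemma belowSteps_card_eq (m : ℕ) (f : Fin m → Bool) :
    (belowSteps f).card = cnt 0 (List.ofFn f) := by
  rw [cnt_eq_sum]
  simp only [zero_add, List.length_ofFn]
  rw [belowSteps, Finset.card_filter]
  rw [Fin.sum_univ_eq_sum_range (fun i => if psum f i ⊓ psum f (i + 1) < 0 then 1 else 0)]
  rfl

lemma Npaths_eq (n k : ℕ) : Npaths n k = Nat.card (PathsL n k) := by
  rw [Npaths, ← Fintype.card_subtype, ← Nat.card_eq_fintype_card]
  apply Nat.card_congr
  have e := funListEquiv (2 * n) (fun l => steps l = 0 ∧ cnt 0 l = 2 * k)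
  refine (Equiv.subtypeEquivRight ?_).trans (e.trans (Equiv.subtypeEquivRight ?_)) <;> intro x
  · rw [psum_eq, belowSteps_card_eq, List.take_of_length_le (by simp)]
  · tauto

lemma Npaths_eq_zero {m l : ℕ} (h : m < l) : Npaths m l = 0 := by
  rw [Npaths_eq, Nat.card_eq_zero]
  left
  constructor
  rintro ⟨x, hlen, -, hcnt⟩
  have := cnt_le_length 0 x
  omega

lemma fr_spec {n : ℕ} (hn : 1 ≤ n) {l : List Bool} (hlen : l.length = 2 * n)
    (hs : steps l = 0) :
    2 ≤ fr l ∧ fr l ≤ 2 * n ∧ Even (fr l) ∧ steps (l.take (fr l)) = 0 ∧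
      ∀ t, 1 ≤ t → t < fr l → steps (l.take t) ≠ 0 := by
  have hle : fr l ≤ 2 * n := by
    refine le_trans (Nat.find_le ?_) (le_of_eq hlen)
    exact Or.inl rfl
  have hmin : ∀ t, t < fr l → ¬ frP l t := fun t ht => Nat.find_min _ ht
  have hne : ∀ t, 1 ≤ t → t < fr l → steps (l.take t) ≠ 0 := by
    intro t h1 h2 hst
    exact hmin t h2 (Or.inr ⟨h1, hst⟩)
  have hst0 : steps (l.take (fr l)) = 0 := by
    rcases Nat.find_spec (frP_ex l) with h | h
    · rw [show fr l = l.length from h, List.take_length]; exact hs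
    · exact h.2
  have h2 : 2 ≤ fr l := by
    by_contra hcon
    push_neg at hcon
    rcases Nat.find_spec (frP_ex l) with h | h
    · change fr l = l.length at h
      omega
    · change 1 ≤ fr l ∧ steps (l.take (fr l)) = 0 at h
      obtain ⟨h1, hst⟩ := h
      have hfr1 : fr l = 1 := by omega
      rw [hfr1] at hst
      cases l with
      | nil => simp at hlen; omega
      | cons b t =>
        simp only [List.take_succ_cons, List.take_zero, steps_cons, steps_nil, add_zero] at hst
        rcases stepVal_eq_or b with h | h <;> omega
  refine ⟨h2, hle, ?_, hst0, hne⟩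
  have := even_steps_add_length (l.take (fr l))
  rw [hst0, zero_add, List.length_take] at this
  rcases this with ⟨c, hc⟩
  exact ⟨fr l / 2, by omega⟩

/-- The fiber of paths with first return at `2 (p+1)` and first step `b`. -/
def Fib (n k p : ℕ) (b : Bool) : Type :=
  {l : List Bool // (l.length = 2 * n ∧ steps l = 0 ∧ cnt 0 l = 2 * k) ∧
    fr l = 2 * (p + 1) ∧ l.headI = b}

lemma fiber_card (n k p : ℕ) (hn : 1 ≤ n) (b : Bool) :
    ((Finset.univ : Finset (Fin (2 * n) → Bool)).filter fun f =>
      (psum f (2 * n) = 0 ∧ (belowSteps f).card = 2 * k) ∧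
        ((fr (List.ofFn f)) / 2 - 1, (List.ofFn f).headI) = (p, b)).card =
      Nat.card (Fib n k p b) := by
  rw [← Fintype.card_subtype, ← Nat.card_eq_fintype_card]
  apply Nat.card_congr
  refine (Equiv.subtypeEquivRight (q := fun f =>
      ((List.ofFn f).length = 2 * n ∧ steps (List.ofFn f) = 0 ∧ cnt 0 (List.ofFn f) = 2 * k) ∧
        fr (List.ofFn f) = 2 * (p + 1) ∧ (List.ofFn f).headI = b) ?_).trans
    ((funListEquiv (2 * n) (fun l =>
      (l.length = 2 * n ∧ steps l = 0 ∧ cnt 0 l = 2 * k) ∧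
        fr l = 2 * (p + 1) ∧ l.headI = b)).trans (Equiv.subtypeEquivRight ?_))
  · intro f
    have hlen : (List.ofFn f).length = 2 * n := by simp
    constructor
    · rintro ⟨⟨hs, hc⟩, hF⟩
      have hs' : steps (List.ofFn f) = 0 := by
        rw [psum_eq, List.take_of_length_le (by simp)] at hs; exact hs
      have hc' : cnt 0 (List.ofFn f) = 2 * k := by rw [← belowSteps_card_eq]; exact hc
      obtain ⟨h2, hle, ⟨c, hcc⟩, -, -⟩ := fr_spec hn hlen hs'
      have hfr : fr (List.ofFn f) / 2 - 1 = p := congrArg Prod.fst hF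
      have hhd : (List.ofFn f).headI = b := congrArg Prod.snd hF
      exact ⟨⟨hlen, hs', hc'⟩, by omega, hhd⟩
    · rintro ⟨⟨-, hs', hc'⟩, hfr, hhd⟩
      have hs : psum f (2 * n) = 0 := by
        rw [psum_eq, List.take_of_length_le (by simp)]; exact hs'
      have hc : (belowSteps f).card = 2 * k := by rw [belowSteps_card_eq]; exact hc'
      refine ⟨⟨hs, hc⟩, ?_⟩
      rw [hfr, hhd]
      simp only [Prod.mk.injEq]
      exact ⟨by omega, trivial⟩
  · intro lx
    exact ⟨fun h => h.2, fun h => ⟨h.1.1, h⟩⟩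

lemma step_A (n k : ℕ) (hn : 1 ≤ n) :
    Npaths n k = ∑ p ∈ Finset.range n,
      (Nat.card (Fib n k p true) + Nat.card (Fib n k p false)) := by
  rw [Npaths]
  rw [Finset.card_eq_sum_card_fiberwise
    (f := fun f => ((fr (List.ofFn f)) / 2 - 1, (List.ofFn f).headI))
    (t := Finset.range n ×ˢ (Finset.univ : Finset Bool))
    (by
      intro f hf
      simp only [Finset.mem_coe, Finset.mem_filter] at hf
      obtain ⟨-, hs, -⟩ := hf
      have hlen : (List.ofFn f).length = 2 * n := by simp
      have hs' : steps (List.ofFn f) = 0 := by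
        rw [psum_eq, List.take_of_length_le (by simp)] at hs; exact hs
      obtain ⟨h2, hle, -, -, -⟩ := fr_spec hn hlen hs'
      simp only [Finset.mem_coe, Finset.mem_product, Finset.mem_range, Finset.mem_univ, and_true]
      omega)]
  rw [Finset.sum_product]
  refine Finset.sum_congr rfl ?_
  intro p hp
  rw [Finset.mem_range] at hp
  rw [Fintype.sum_bool]
  simp only [Finset.filter_filter]
  congr 1
  · exact fiber_card n k p hn true
  · exact fiber_card n k p hn false

lemma nonneg_of_cnt_zero {m : List Bool} (hm : cnt 0 m = 0) : ∀ j, 0 ≤ steps (m.take j) := by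
  have := (cnt_eq_zero_iff le_rfl m).mp hm
  simpa using this

lemma cnt_one_eq_zero {m : List Bool} (hm : cnt 0 m = 0) : cnt 1 m = 0 := by
  rw [cnt_eq_zero_iff (by norm_num)]
  intro j
  have := nonneg_of_cnt_zero hm j
  omega

lemma eq_false_of_stepVal {b : Bool} (h : stepVal b = -1) : b = false := by
  cases b
  · rfl
  · simp [stepVal] at h

lemma eq_true_of_stepVal {b : Bool} (h : stepVal b = 1) : b = true := by
  cases b
  · simp [stepVal] at h
  · rfl

lemma glue_true_mem {n k p : ℕ} (hp : p < n) {m t : List Bool}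
    (hm1 : m.length = 2 * p) (hm2 : steps m = 0) (hm3' : cnt 0 m = 0)
    (ht1 : t.length = 2 * (n - p - 1)) (ht2 : steps t = 0) (ht3 : cnt 0 t = 2 * k) :
    (((true :: m) ++ (false :: t)).length = 2 * n ∧ steps ((true :: m) ++ (false :: t)) = 0 ∧
        cnt 0 ((true :: m) ++ (false :: t)) = 2 * k) ∧
      fr ((true :: m) ++ (false :: t)) = 2 * (p + 1) ∧
        ((true :: m) ++ (false :: t)).headI = true := by
  have hnn := nonneg_of_cnt_zero hm3'
  refine ⟨⟨?_, ?_, ?_⟩, ?_, rfl⟩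
  · simp only [List.length_append, List.length_cons, hm1, ht1]; omega
  · simp only [steps_append, steps_cons, hm2, ht2, stepVal]; norm_num
  · rw [cnt_append, cnt_cons, cnt_cons]
    simp only [steps_cons, hm2, stepVal]
    norm_num
    rw [cnt_one_eq_zero hm3', ht3]
    omega
  · rw [fr_eq_iff]
    constructor
    · refine Or.inr ⟨by omega, ?_⟩
      rw [show 2 * (p + 1) = (true :: m).length + 1 by simp [hm1]; ring,
        List.take_length_add_append]
      simp [hm2, stepVal]
    · rintro j hj (hl | ⟨hj1, hjs⟩)
      · simp only [List.length_append, List.length_cons, hm1, ht1] at hl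
        omega
      · rw [List.take_append_of_le_length (by simp [hm1]; omega),
          show j = (j - 1) + 1 by omega, List.take_succ_cons] at hjs
        have := hnn (j - 1)
        simp only [steps_cons, stepVal] at hjs
        norm_num at hjs
        omega

lemma fib_true_card (n k p : ℕ) (hp : p < n) :
    Nat.card (Fib n k p true) = Npaths p 0 * Npaths (n - p - 1) k := by
  rw [Npaths_eq, Npaths_eq, ← Nat.card_prod]
  refine Nat.card_congr (Equiv.ofBijective
    (fun x => ⟨(true :: x.1.1) ++ (false :: x.2.1),
      glue_true_mem hp x.1.2.1 x.1.2.2.1 (by simpa using x.1.2.2.2)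
        x.2.2.1 x.2.2.2.1 x.2.2.2.2⟩) ⟨?_, ?_⟩).symm
  · -- injectivity
    intro x y hxy
    obtain ⟨⟨m1, hm1x⟩, ⟨t1, ht1x⟩⟩ := x
    obtain ⟨⟨m2, hm2x⟩, ⟨t2, ht2x⟩⟩ := y
    have hxy' : (true :: m1) ++ (false :: t1) = (true :: m2) ++ (false :: t2) :=
      congrArg Subtype.val hxy
    obtain ⟨h1, h2⟩ := List.append_inj hxy' (by simp [hm1x.1, hm2x.1])
    simp only [List.cons.injEq, true_and] at h1 h2
    refine Prod.ext_iff.mpr ?_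
    exact ⟨Subtype.ext h1, Subtype.ext h2⟩
  · -- surjectivity
    rintro ⟨l, ⟨hlen, hs, hc⟩, hfr, hhd⟩
    obtain ⟨hfrP, hfrmin⟩ := (fr_eq_iff l _).mp hfr
    cases l with
    | nil => simp at hlen; omega
    | cons a r =>
    have ha : a = true := hhd
    subst ha
    have hrlen : r.length = 2 * n - 1 := by simp at hlen; omega
    have hne : ∀ j, 1 ≤ j → j < 2 * (p + 1) → steps ((true :: r).take j) ≠ 0 := by
      intro j hj1 hj2 hj0
      exact hfrmin j hj2 (Or.inr ⟨hj1, hj0⟩)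
    have h1 : steps ((true :: r).take 1) = 1 := by simp [stepVal]
    have hpos : ∀ j, 1 ≤ j → j ≤ 2 * p + 1 → 0 < steps ((true :: r).take j) :=
      pos_of_first_pos _ (2 * p + 1) (by simp [hrlen]; omega)
        (fun j hj1 hj2 => hne j hj1 (by omega)) h1
    have hret : steps ((true :: r).take (2 * (p + 1))) = 0 := by
      rcases hfrP with h | h
      · rw [h, List.take_length]; exact hs
      · exact h.2
    have hstep := steps_take_succ (true :: r) (2 * p + 1) (by simp [hrlen]; omega)
    rw [show 2 * p + 1 + 1 = 2 * (p + 1) by ring, hret] at hstep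
    have hpos1 := hpos (2 * p + 1) (by omega) le_rfl
    have hsv : stepVal ((true :: r)[2 * p + 1]!) = -1 := by
      rcases stepVal_eq_or ((true :: r)[2 * p + 1]!) with h | h
      · omega
      · exact h
    have hh1 : steps ((true :: r).take (2 * p + 1)) = 1 := by omega
    have hget : (true :: r)[2 * p + 1]! = false := eq_false_of_stepVal hsv
    have h2p : 2 * p < r.length := by omega
    have hr2p : r[2 * p]'h2p = false := by
      rw [← List.getElem_cons_succ true r (2 * p) (by simpa using Nat.succ_lt_succ h2p)]
      rw [← getElem!_pos (true :: r) (2 * p + 1) (by simp; omega)]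
      exact hget
    have hdec : r = r.take (2 * p) ++ false :: r.drop (2 * p + 1) := by
      conv_lhs => rw [← List.take_append_drop (2 * p) r]
      congr 1
      rw [List.drop_eq_getElem_cons h2p, hr2p]
    have hdec2 : true :: r = (true :: r.take (2 * p)) ++ (false :: r.drop (2 * p + 1)) := by
      conv_lhs => rw [hdec]
      rw [List.cons_append]
    have hmid : steps (r.take (2 * p)) = 0 := by
      rw [List.take_succ_cons] at hh1
      simp only [steps_cons, stepVal] at hh1
      norm_num at hh1
      exact hh1
    have hmnn : ∀ j, 0 ≤ steps ((r.take (2 * p)).take j) := by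
      intro j
      rcases le_or_gt (2 * p) j with hj | hj
      · rw [List.take_of_length_le (by simp; omega), hmid]
      · rw [List.take_take, min_eq_left hj.le]
        have := hpos (j + 1) (by omega) (by omega)
        rw [List.take_succ_cons] at this
        simp only [steps_cons, stepVal] at this
        norm_num at this
        omega
    have hmcnt : cnt 0 (r.take (2 * p)) = 0 := by
      rw [cnt_eq_zero_iff le_rfl]
      intro j
      have := hmnn j
      omega
    have htst : steps (r.drop (2 * p + 1)) = 0 := by
      have hx := hs
      rw [hdec2] at hx
      simp only [steps_append, steps_cons, hmid, stepVal] at hx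
      norm_num at hx
      exact hx
    have htcnt : cnt 0 (r.drop (2 * p + 1)) = 2 * k := by
      have hx := hc
      rw [hdec2, cnt_append, cnt_cons, cnt_cons] at hx
      simp only [steps_cons, hmid, stepVal] at hx
      norm_num at hx
      rw [cnt_one_eq_zero hmcnt] at hx
      omega
    refine ⟨⟨⟨r.take (2 * p), by simp [hrlen]; omega, hmid, by simpa using hmcnt⟩,
      ⟨r.drop (2 * p + 1), by simp [hrlen]; omega, htst, htcnt⟩⟩, ?_⟩
    exact Subtype.ext hdec2.symm

/-- Tails after a negative first excursion of semilength `p+1`. -/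
def TailN (n k p : ℕ) : Type :=
  {t : List Bool // t.length = 2 * (n - p - 1) ∧ steps t = 0 ∧ 2 * (p + 1) + cnt 0 t = 2 * k}

lemma tailN_card (n k p : ℕ) :
    Nat.card (TailN n k p) = if p + 1 ≤ k then Npaths (n - p - 1) (k - p - 1) else 0 := by
  split
  · rw [Npaths_eq]
    apply Nat.card_congr
    apply Equiv.subtypeEquivRight
    intro x
    exact ⟨fun ⟨a, b, c⟩ => ⟨a, b, by omega⟩, fun ⟨a, b, c⟩ => ⟨a, b, by omega⟩⟩
  · rw [Nat.card_eq_zero]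
    left
    constructor
    rintro ⟨x, -, -, hx⟩
    omega

lemma glue_false_mem {n k p : ℕ} (hp : p < n) {m t : List Bool}
    (hm1 : m.length = 2 * p) (hm2 : steps m = 0) (hm3' : cnt 0 m = 0)
    (ht1 : t.length = 2 * (n - p - 1)) (ht2 : steps t = 0)
    (ht3 : 2 * (p + 1) + cnt 0 t = 2 * k) :
    (((false :: m.map not) ++ (true :: t)).length = 2 * n ∧
        steps ((false :: m.map not) ++ (true :: t)) = 0 ∧
        cnt 0 ((false :: m.map not) ++ (true :: t)) = 2 * k) ∧
      fr ((false :: m.map not) ++ (true :: t)) = 2 * (p + 1) ∧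
        ((false :: m.map not) ++ (true :: t)).headI = false := by
  have hnn := nonneg_of_cnt_zero hm3'
  -- heights inside the excursion
  have hneg : ∀ j, 1 ≤ j → j ≤ 2 * p + 1 → steps ((false :: m.map not).take j) ≤ -1 := by
    intro j hj1 hj2
    rw [show j = (j - 1) + 1 by omega, List.take_succ_cons, ← List.map_take]
    simp only [steps_cons, stepVal, steps_map_not]
    have := hnn (j - 1)
    norm_num
    omega
  refine ⟨⟨?_, ?_, ?_⟩, ?_, rfl⟩
  · simp only [List.length_append, List.length_cons, List.length_map, hm1, ht1]; omega
  · simp only [steps_append, steps_cons, steps_map_not, hm2, ht2, stepVal]; norm_num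
  · rw [cnt_append]
    have hexc : cnt 0 (false :: m.map not) = 2 * p + 1 := by
      have := cnt_eq_length (h := 0) (false :: m.map not) (fun j hj => ?_)
      · rw [this]; simp [hm1]
      · simp only [List.length_cons, List.length_map, hm1] at hj
        rcases Nat.eq_zero_or_pos j with h0 | h0
        · subst h0
          simp [stepVal]
        · have := hneg j h0 (by omega)
          have hmin : (0 : ℤ) + steps ((false :: m.map not).take j) ≤ -1 := by omega
          exact lt_of_le_of_lt (min_le_left _ _) (by omega)
    rw [hexc]
    have hsteps : steps (false :: m.map not) = -1 := by
      simp [stepVal, steps_map_not, hm2]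
    rw [hsteps, cnt_cons]
    simp only [stepVal]
    norm_num
    omega
  · rw [fr_eq_iff]
    constructor
    · refine Or.inr ⟨by omega, ?_⟩
      rw [show 2 * (p + 1) = (false :: m.map not).length + 1 by simp [hm1]; ring,
        List.take_length_add_append]
      simp [hm2, stepVal, steps_map_not]
    · rintro j hj (hl | ⟨hj1, hjs⟩)
      · simp only [List.length_append, List.length_cons, List.length_map, hm1, ht1] at hl
        omega
      · rw [List.take_append_of_le_length (by simp [hm1]; omega)] at hjs
        have := hneg j hj1 (by omega)
        omega

lemma fib_false_card (n k p : ℕ) (hp : p < n) :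
    Nat.card (Fib n k p false) = Npaths p 0 * Nat.card (TailN n k p) := by
  rw [Npaths_eq, ← Nat.card_prod]
  refine Nat.card_congr (Equiv.ofBijective
    (fun x => ⟨(false :: x.1.1.map not) ++ (true :: x.2.1),
      glue_false_mem hp x.1.2.1 x.1.2.2.1 (by simpa using x.1.2.2.2)
        x.2.2.1 x.2.2.2.1 x.2.2.2.2⟩) ⟨?_, ?_⟩).symm
  · -- injectivity
    intro x y hxy
    obtain ⟨⟨m1, hm1x⟩, ⟨t1, ht1x⟩⟩ := x
    obtain ⟨⟨m2, hm2x⟩, ⟨t2, ht2x⟩⟩ := y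
    have hxy' : (false :: m1.map not) ++ (true :: t1) = (false :: m2.map not) ++ (true :: t2) :=
      congrArg Subtype.val hxy
    obtain ⟨h1, h2⟩ := List.append_inj hxy' (by simp [hm1x.1, hm2x.1])
    simp only [List.cons.injEq, true_and] at h1 h2
    have h1' : m1 = m2 := by
      have := congrArg (List.map not) h1
      simpa [List.map_map, Function.comp_def] using this
    refine Prod.ext_iff.mpr ?_
    exact ⟨Subtype.ext h1', Subtype.ext h2⟩
  · -- surjectivity
    rintro ⟨l, ⟨hlen, hs, hc⟩, hfr, hhd⟩
    obtain ⟨hfrP, hfrmin⟩ := (fr_eq_iff l _).mp hfr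
    cases l with
    | nil => simp at hlen; omega
    | cons a r =>
    have ha : a = false := hhd
    subst ha
    have hrlen : r.length = 2 * n - 1 := by simp at hlen; omega
    have hne : ∀ j, 1 ≤ j → j < 2 * (p + 1) → steps ((false :: r).take j) ≠ 0 := by
      intro j hj1 hj2 hj0
      exact hfrmin j hj2 (Or.inr ⟨hj1, hj0⟩)
    -- reflected path is positive
    have hmaptake : ∀ j, ((false :: r).map not).take j = ((false :: r).take j).map not := by
      intro j
      rw [List.map_take]
    have hneL : ∀ j, 1 ≤ j → j < 2 * (p + 1) → steps (((false :: r).map not).take j) ≠ 0 := by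
      intro j hj1 hj2
      rw [hmaptake, steps_map_not]
      have := hne j hj1 hj2
      omega
    have h1L : steps (((false :: r).map not).take 1) = 1 := by
      simp [stepVal]
    have hposL : ∀ j, 1 ≤ j → j ≤ 2 * p + 1 → 0 < steps (((false :: r).map not).take j) :=
      pos_of_first_pos _ (2 * p + 1) (by simp [hrlen]; omega)
        (fun j hj1 hj2 => hneL j hj1 (by omega)) h1L
    have hneg : ∀ j, 1 ≤ j → j ≤ 2 * p + 1 → steps ((false :: r).take j) ≤ -1 := by
      intro j hj1 hj2
      have := hposL j hj1 hj2
      rw [hmaptake, steps_map_not] at this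
      omega
    have hret : steps ((false :: r).take (2 * (p + 1))) = 0 := by
      rcases hfrP with h | h
      · rw [h, List.take_length]; exact hs
      · exact h.2
    have hstep := steps_take_succ (false :: r) (2 * p + 1) (by simp [hrlen]; omega)
    rw [show 2 * p + 1 + 1 = 2 * (p + 1) by ring, hret] at hstep
    have hneg1 := hneg (2 * p + 1) (by omega) le_rfl
    have hsv : stepVal ((false :: r)[2 * p + 1]!) = 1 := by
      rcases stepVal_eq_or ((false :: r)[2 * p + 1]!) with h | h
      · exact h
      · omega
    have hh1 : steps ((false :: r).take (2 * p + 1)) = -1 := by omega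
    have hget : (false :: r)[2 * p + 1]! = true := eq_true_of_stepVal hsv
    have h2p : 2 * p < r.length := by omega
    have hr2p : r[2 * p]'h2p = true := by
      rw [← List.getElem_cons_succ false r (2 * p) (by simpa using Nat.succ_lt_succ h2p)]
      rw [← getElem!_pos (false :: r) (2 * p + 1) (by simp; omega)]
      exact hget
    have hdec : r = r.take (2 * p) ++ true :: r.drop (2 * p + 1) := by
      conv_lhs => rw [← List.take_append_drop (2 * p) r]
      congr 1
      rw [List.drop_eq_getElem_cons h2p, hr2p]
    have hdec2 : false :: r = (false :: r.take (2 * p)) ++ (true :: r.drop (2 * p + 1)) := by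
      conv_lhs => rw [hdec]
      rw [List.cons_append]
    have hmid : steps (r.take (2 * p)) = 0 := by
      rw [List.take_succ_cons] at hh1
      simp only [steps_cons, stepVal] at hh1
      norm_num at hh1
      omega
    -- the reflected middle is a Dyck path
    have hmnn : ∀ j, 0 ≤ steps (((r.take (2 * p)).map not).take j) := by
      intro j
      rw [← List.map_take, steps_map_not]
      rcases le_or_gt (2 * p) j with hj | hj
      · rw [List.take_of_length_le (by simp; omega), hmid]; norm_num
      · rw [List.take_take, min_eq_left hj.le]
        have := hneg (j + 1) (by omega) (by omega)
        rw [List.take_succ_cons] at this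
        simp only [steps_cons, stepVal] at this
        norm_num at this
        omega
    have hmcnt : cnt 0 ((r.take (2 * p)).map not) = 0 := by
      rw [cnt_eq_zero_iff le_rfl]
      intro j
      have := hmnn j
      omega
    have htake : ∀ i, i ≤ 2 * p + 1 → (false :: r.take (2 * p)).take i = (false :: r).take i := by
      intro i hi
      conv_rhs => rw [hdec2]
      rw [List.take_append_of_le_length (by simp; omega)]
    have hexc : cnt 0 (false :: r.take (2 * p)) = 2 * p + 1 := by
      have hcl := cnt_eq_length (h := 0) (false :: r.take (2 * p)) (fun j hj => ?_)
      · rw [hcl]; simp; omega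
      · simp only [List.length_cons, List.length_take] at hj
        rw [htake j (by omega), htake (j + 1) (by omega)]
        rcases Nat.eq_zero_or_pos j with h0 | h0
        · subst h0
          simp [stepVal]
        · have := hneg j h0 (by omega)
          exact lt_of_le_of_lt (min_le_left _ _) (by omega)
    have htst : steps (r.drop (2 * p + 1)) = 0 := by
      have hx := hs
      rw [hdec2] at hx
      simp only [steps_append, steps_cons, hmid, stepVal] at hx
      norm_num at hx
      exact hx
    have htcnt : 2 * (p + 1) + cnt 0 (r.drop (2 * p + 1)) = 2 * k := by
      have hx := hc
      rw [hdec2, cnt_append] at hx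
      rw [hexc] at hx
      have hsteps : steps (false :: r.take (2 * p)) = -1 := by
        simp [stepVal, hmid]
      rw [hsteps, cnt_cons] at hx
      simp only [stepVal] at hx
      norm_num at hx
      omega
    refine ⟨⟨⟨(r.take (2 * p)).map not, by simp [hrlen]; omega, by rw [steps_map_not, hmid]; norm_num,
      by simpa using hmcnt⟩,
      ⟨r.drop (2 * p + 1), by simp [hrlen]; omega, htst, htcnt⟩⟩, ?_⟩
    apply Subtype.ext
    show (false :: ((r.take (2 * p)).map not).map not) ++ (true :: r.drop (2 * p + 1)) =
      false :: r
    rw [List.map_map]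
    simp only [Function.comp_def, Bool.not_not, List.map_id_fun', id]
    exact hdec2.symm

lemma reindex (N c : ℕ) :
    ∑ p ∈ Finset.range c, catalan p * catalan (N - p - 1) =
      ∑ q ∈ Finset.Icc 1 c, catalan (q - 1) * catalan (N - q) := by
  refine Finset.sum_nbij' (fun p => p + 1) (fun q => q - 1) ?_ ?_ ?_ ?_ ?_
  all_goals intro a ha
  all_goals simp only [Finset.mem_range, Finset.mem_Icc] at ha ⊢
  all_goals try omega
  all_goals simp only [Nat.add_sub_cancel]
  all_goals congr 1
  all_goals omega

end CF

/-- Assuming inductively that N(m,l) = C_m for all m < n and l ≤ m, the number of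
k-negative paths of length 2n satisfies
N(n,k) = Σ_{p=1}^{n−k} C_{p−1} C_{n−p} + Σ_{q=1}^{k} C_{q−1} C_{n−q}. -/
theorem Npaths_recurrence (n k : ℕ) (hn : 1 ≤ n) (hk : k ≤ n)
    (ih : ∀ m < n, ∀ l ≤ m, Npaths m l = catalan m) :
    Npaths n k =
      (∑ p ∈ Finset.Icc 1 (n - k), catalan (p - 1) * catalan (n - p)) +
      (∑ q ∈ Finset.Icc 1 k, catalan (q - 1) * catalan (n - q)) := by
  rw [CF.step_A n k hn]
  have hterm : ∀ p ∈ Finset.range n,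
      Nat.card (CF.Fib n k p true) + Nat.card (CF.Fib n k p false) =
        (if p < n - k then catalan p * catalan (n - p - 1) else 0) +
        (if p < k then catalan p * catalan (n - p - 1) else 0) := by
    intro p hp
    rw [Finset.mem_range] at hp
    rw [CF.fib_true_card n k p hp, CF.fib_false_card n k p hp, CF.tailN_card]
    have hc0 : Npaths p 0 = catalan p := ih p hp 0 (Nat.zero_le p)
    congr 1
    · by_cases h : k ≤ n - p - 1
      · rw [ih (n - p - 1) (by omega) k h, hc0, if_pos (by omega)]
      · rw [CF.Npaths_eq_zero (m := n - p - 1) (l := k) (by omega), mul_zero,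
          if_neg (by omega)]
    · by_cases h : p + 1 ≤ k
      · have e1 : Npaths (n - p - 1) (k - p - 1) = catalan (n - p - 1) :=
          ih (n - p - 1) (by omega) (k - p - 1) (by omega)
        rw [if_pos h, e1, hc0, if_pos (by omega)]
      · rw [if_neg h, mul_zero, if_neg (by omega)]
  rw [Finset.sum_congr rfl hterm, Finset.sum_add_distrib]
  congr 1
  · rw [← Finset.sum_filter]
    have : Finset.filter (fun p => p < n - k) (Finset.range n) = Finset.range (n - k) := by
      ext x
      simp only [Finset.mem_filter, Finset.mem_range]
      omega
    rw [this, CF.reindex]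
  · rw [← Finset.sum_filter]
    have : Finset.filter (fun p => p < k) (Finset.range n) = Finset.range k := by
      ext x
      simp only [Finset.mem_filter, Finset.mem_range]
      omega
    rw [this, CF.reindex]
end

section
/- The map φ₊ taking a k-negative path s = p·(uQd)·r (where uQd is the last positive prime Dyck subpath of s, and r is a negative Dyck path) to φ₊(s) = p·d·r·u·Q is a bijection from S_k to S_{k+1}, for 0 ≤ k < n. -/
namespace PhiAux

lemma psumL_zero (s : List ℤ) : psumL s 0 = 0 := rfl

lemma psumL_cons (x : ℤ) (t : List ℤ) (j : ℕ) : psumL (x :: t) (j+1) = x + psumL t j := by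
  simp [psumL, List.take_succ_cons]

lemma psumL_append (a b : List ℤ) (i : ℕ) :
    psumL (a ++ b) i = psumL a i + psumL b (i - a.length) := by
  simp [psumL, List.take_append]

lemma psumL_eq_sum (s : List ℤ) {i : ℕ} (h : s.length ≤ i) : psumL s i = s.sum := by
  simp [psumL, List.take_of_length_le h]

lemma psumL_getElem (s : List ℤ) {i : ℕ} (h : i < s.length) :
    psumL s (i+1) = psumL s i + s[i] := by
  unfold psumL
  rw [List.take_succ, List.getElem?_eq_getElem h]
  simp only [Option.toList_some, List.sum_append, List.sum_cons, List.sum_nil]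
  ring

lemma psumL_succ_le (s : List ℤ) (hs : IsStepSeq s) (i : ℕ) :
    psumL s (i+1) ≤ psumL s i + 1 ∧ psumL s i ≤ psumL s (i+1) + 1 := by
  rcases lt_or_ge i s.length with h | h
  · rw [psumL_getElem s h]
    rcases hs s[i] (List.getElem_mem h) with h1 | h1 <;> omega
  · rw [psumL_eq_sum s h, psumL_eq_sum s (by omega)]; omega

def bC : ℤ → List ℤ → ℕ
  | _, [] => 0
  | c, x :: t => (if min c (c+x) < 0 then 1 else 0) + bC (c+x) t

lemma bC_eq (s : List ℤ) (c : ℤ) :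
    ((Finset.range s.length).filter fun i => min (c + psumL s i) (c + psumL s (i + 1)) < 0).card
      = bC c s := by
  induction s generalizing c with
  | nil => simp [bC]
  | cons x t ih =>
    rw [Finset.card_filter]
    rw [List.length_cons, Finset.sum_range_succ']
    have h1 : ∀ j : ℕ, psumL (x :: t) (j+1) = x + psumL t j := psumL_cons x t
    simp only [h1, psumL_zero, add_zero]
    rw [bC]
    rw [← ih (c+x), Finset.card_filter]
    have : ∀ j : ℕ, c + (x + psumL t j) = (c + x) + psumL t j := by intro j; ring
    simp only [this]
    omega

lemma belowCountL_eq (s : List ℤ) : belowCountL s = bC 0 s := by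
  rw [belowCountL, ← bC_eq]
  simp

lemma bC_append (a b : List ℤ) (c : ℤ) : bC c (a ++ b) = bC c a + bC (c + a.sum) b := by
  induction a generalizing c with
  | nil => simp [bC]
  | cons x t ih =>
    rw [List.cons_append, bC, bC, ih, List.sum_cons]
    ring_nf

lemma bC_of_nonneg (s : List ℤ) (c : ℤ) (h : ∀ i, 0 ≤ c + psumL s i) : bC c s = 0 := by
  induction s generalizing c with
  | nil => rfl
  | cons x t ih =>
    rw [bC]
    have h0 := h 0
    have h1 := h 1
    rw [psumL_zero, add_zero] at h0
    rw [psumL_cons, psumL_zero, add_zero] at h1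
    rw [if_neg (by omega), ih (c+x) (fun i => by have := h (i+1); rw [psumL_cons] at this; omega)]

lemma bC_of_nonpos (s : List ℤ) (c : ℤ) (hs : IsStepSeq s) (h : ∀ i, c + psumL s i ≤ 0) :
    bC c s = s.length := by
  induction s generalizing c with
  | nil => rfl
  | cons x t ih =>
    rw [bC]
    have h0 := h 0
    have h1 := h 1
    rw [psumL_zero, add_zero] at h0
    rw [psumL_cons, psumL_zero, add_zero] at h1
    have hx : x = 1 ∨ x = -1 := hs x (by simp)
    rw [if_pos (by omega), ih (c+x) (fun a ha => hs a (by simp [ha]))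
      (fun i => by have := h (i+1); rw [psumL_cons] at this; omega)]
    simp [Nat.add_comm]

lemma psum_fact1 (p w : List ℤ) {i : ℕ} (h : i ≤ p.length) :
    psumL (p ++ w) i = psumL p i := by
  rw [psumL_append, Nat.sub_eq_zero_of_le h, psumL_zero, add_zero]

lemma psum_fact2 (p Q r : List ℤ) {j : ℕ} (hj : j ≤ Q.length) :
    psumL (p ++ 1 :: (Q ++ (-1) :: r)) (p.length + 1 + j) = p.sum + 1 + psumL Q j := by
  rw [psumL_append, psumL_eq_sum p (by omega)]
  have h1 : p.length + 1 + j - p.length = j + 1 := by omega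
  rw [h1, psumL_cons, psumL_append, Nat.sub_eq_zero_of_le hj, psumL_zero, add_zero]
  ring

lemma psum_fact3 (p Q r : List ℤ) (m : ℕ) :
    psumL (p ++ 1 :: (Q ++ (-1) :: r)) (p.length + Q.length + 2 + m)
      = p.sum + Q.sum + psumL r m := by
  rw [psumL_append, psumL_eq_sum p (by omega)]
  have h1 : p.length + Q.length + 2 + m - p.length = (Q.length + 1 + m) + 1 := by omega
  rw [h1, psumL_cons, psumL_append, psumL_eq_sum Q (by omega)]
  have h2 : Q.length + 1 + m - Q.length = m + 1 := by omega
  rw [h2, psumL_cons]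
  ring

def lastHi (s : List ℤ) : ℕ := Nat.findGreatest (fun p => 1 ≤ psumL s p) s.length

def lastZe (s : List ℤ) : ℕ := Nat.findGreatest (fun p => psumL s p = 0) (lastHi s)

def phi (s : List ℤ) : List ℤ :=
  s.take (lastZe s) ++
    (-1) :: (s.drop (lastHi s + 1) ++ 1 :: ((s.take (lastHi s)).drop (lastZe s + 1)))

def negL (s : List ℤ) : List ℤ := s.map (fun x => -x)

def psi (t : List ℤ) : List ℤ := negL (phi (negL t))

lemma length_fact (p Q r : List ℤ) :
    (p ++ 1 :: (Q ++ (-1) :: r)).length = p.length + Q.length + 2 + r.length := by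
  simp; omega

lemma phi_eq (p Q r : List ℤ) (hps : p.sum = 0) (hQ : IsDyck Q) (hr : IsNegDyck r) :
    phi (p ++ 1 :: (Q ++ (-1) :: r)) = p ++ (-1) :: (r ++ 1 :: Q) := by
  have hlen : (p ++ 1 :: (Q ++ (-1) :: r)).length = p.length + Q.length + 2 + r.length :=
    length_fact p Q r
  have hJ : lastHi (p ++ 1 :: (Q ++ (-1) :: r)) = p.length + Q.length + 1 := by
    rw [lastHi, Nat.findGreatest_eq_iff]
    refine ⟨by omega, fun _ => ?_, fun m hm hm' => ?_⟩
    · have h2 := psum_fact2 p Q r (le_refl Q.length)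
      rw [show p.length + 1 + Q.length = p.length + Q.length + 1 by omega, hps,
        psumL_eq_sum Q (le_refl Q.length), hQ.2.1] at h2
      show 1 ≤ psumL (p ++ 1 :: (Q ++ (-1) :: r)) (p.length + Q.length + 1)
      omega
    · obtain ⟨m', rfl⟩ : ∃ m', m = p.length + Q.length + 2 + m' :=
        ⟨m - (p.length + Q.length + 2), by omega⟩
      show ¬ 1 ≤ psumL (p ++ 1 :: (Q ++ (-1) :: r)) (p.length + Q.length + 2 + m')
      rw [psum_fact3 p Q r m', hps, hQ.2.1]
      have := hr.2.2 m'
      omega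
  have hI : lastZe (p ++ 1 :: (Q ++ (-1) :: r)) = p.length := by
    rw [lastZe, hJ, Nat.findGreatest_eq_iff]
    refine ⟨by omega, fun _ => ?_, fun m hm hm' => ?_⟩
    · show psumL (p ++ 1 :: (Q ++ (-1) :: r)) p.length = 0
      rw [psum_fact1 p _ (le_refl p.length), psumL_eq_sum p (le_refl p.length), hps]
    · obtain ⟨j, rfl⟩ : ∃ j, m = p.length + 1 + j := ⟨m - (p.length + 1), by omega⟩
      have hj : j ≤ Q.length := by omega
      show ¬ psumL (p ++ 1 :: (Q ++ (-1) :: r)) (p.length + 1 + j) = 0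
      rw [psum_fact2 p Q r hj, hps]
      have := hQ.2.2 j
      omega
  rw [phi, hI, hJ]
  have e1 : (p ++ 1 :: (Q ++ (-1) :: r)).take p.length = p := List.take_left' rfl
  have e2 : (p ++ 1 :: (Q ++ (-1) :: r)).drop (p.length + Q.length + 1 + 1) = r := by
    have h3 : p ++ 1 :: (Q ++ (-1) :: r) = (p ++ 1 :: Q ++ [(-1 : ℤ)]) ++ r := by simp
    rw [h3, List.drop_left' (by simp; omega)]
  have e3 : ((p ++ 1 :: (Q ++ (-1) :: r)).take (p.length + Q.length + 1)).drop (p.length + 1)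
      = Q := by
    have h4 : p ++ 1 :: (Q ++ (-1) :: r) = (p ++ 1 :: Q) ++ ((-1) :: r) := by simp
    rw [h4, List.take_left' (by simp; omega)]
    have h5 : p ++ 1 :: Q = (p ++ [(1 : ℤ)]) ++ Q := by simp
    rw [h5, List.drop_left' (by simp)]
  rw [e1, e2, e3]

lemma ivt (f : ℕ → ℤ) (hstep : ∀ i, f (i+1) ≤ f i + 1) :
    ∀ (d a : ℕ), f a ≤ 0 → 1 ≤ f (a + d) → ∃ c, a ≤ c ∧ c ≤ a + d ∧ f c = 0 := by
  intro d
  induction d with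
  | zero =>
    intro a h1 h2
    rw [Nat.add_zero] at h2
    omega
  | succ d ih =>
    intro a h1 h2
    by_cases h0 : f a = 0
    · exact ⟨a, le_refl a, by omega, h0⟩
    · have h3 : f (a+1) ≤ 0 := by have := hstep a; omega
      have h4 : 1 ≤ f (a + 1 + d) := by
        rw [show a + 1 + d = a + (d + 1) by omega]; exact h2
      obtain ⟨c, hc1, hc2, hc3⟩ := ih (a+1) h3 h4
      exact ⟨c, by omega, by omega, hc3⟩

lemma fact_exists (s : List ℤ) (hs : IsStepSeq s) (h0 : s.sum = 0)
    (hex : ∃ i, 1 ≤ psumL s i) :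
    ∃ p Q r : List ℤ, IsStepSeq p ∧ p.sum = 0 ∧ IsDyck Q ∧ IsNegDyck r ∧
      s = p ++ 1 :: (Q ++ (-1) :: r) := by
  obtain ⟨i, hi⟩ := hex
  have hile : i ≤ s.length := by
    by_contra h
    rw [psumL_eq_sum s (by omega), h0] at hi; omega
  have hJle : lastHi s ≤ s.length := by rw [lastHi]; exact Nat.findGreatest_le s.length
  have hPJ0 : 1 ≤ psumL s (lastHi s) := by rw [lastHi]; exact Nat.findGreatest_spec (P := fun p => 1 ≤ psumL s p) hile hi
  have hgt0 : ∀ m, lastHi s < m → m ≤ s.length → ¬ (1 ≤ psumL s m) := by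
    intro m h1m h2m
    rw [lastHi] at h1m
    exact Nat.findGreatest_is_greatest h1m h2m
  have hIle : lastZe s ≤ lastHi s := by rw [lastZe]; exact Nat.findGreatest_le _
  have hI00 : psumL s (lastZe s) = 0 := by
    rw [lastZe]; exact Nat.findGreatest_spec (P := fun p => psumL s p = 0) (Nat.zero_le _) (psumL_zero s)
  have hImax0 : ∀ m, lastZe s < m → m ≤ lastHi s → ¬ (psumL s m = 0) := by
    intro m h1m h2m
    rw [lastZe] at h1m
    exact Nat.findGreatest_is_greatest h1m h2m
  set J := lastHi s with hJdef
  set I := lastZe s with hIdef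
  have hPJ : 1 ≤ psumL s J := hPJ0
  have hI0 : psumL s I = 0 := hI00
  have hImax : ∀ m, I < m → m ≤ J → ¬ (psumL s m = 0) := hImax0
  have hJlt : J < s.length := by
    rcases Nat.lt_or_ge J s.length with h | h
    · exact h
    · exfalso
      rw [psumL_eq_sum s h, h0] at hPJ
      omega
  have hgt' : ∀ m, J < m → psumL s m ≤ 0 := by
    intro m h1
    rcases le_or_gt m s.length with h2 | h2
    · have := hgt0 m h1 h2
      omega
    · rw [psumL_eq_sum s (by omega), h0]
  have hstep := psumL_succ_le s hs
  have hJ1 : psumL s J = 1 := by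
    have := (hstep J).2; have := hgt' (J+1) (by omega); omega
  have hJ0 : psumL s (J+1) = 0 := by
    have := (hstep J).2; have := hgt' (J+1) (by omega); omega
  have hsJ : s[J] = -1 := by have := psumL_getElem s hJlt; omega
  have hIJ : I < J := by
    rcases Nat.lt_or_ge I J with h | h
    · exact h
    · exfalso
      have : I = J := by omega
      rw [this, hJ1] at hI0
      omega
  have claim : ∀ m, I < m → m ≤ J → 1 ≤ psumL s m := by
    intro m h1 h2
    by_contra hc
    obtain ⟨c, hc1, hc2, hc3⟩ := ivt (psumL s) (fun i => (hstep i).1) (J - m) m (by omega)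
      (by rw [show m + (J - m) = J by omega]; omega)
    exact hImax c (by omega) (by omega) hc3
  have hIlt : I < s.length := by omega
  have hsI : s[I] = 1 := by
    have h1 := psumL_getElem s hIlt
    have h2 := claim (I+1) (by omega) (by omega)
    have h3 := (hstep I).1
    omega
  -- reconstruction
  have heq : s = s.take I ++ 1 :: ((s.drop (I+1)).take (J - (I+1)) ++ (-1) :: s.drop (J+1)) := by
    have e : s.drop (I+1) = (s.drop (I+1)).take (J - (I+1)) ++ s.drop J := by
      have h6 := List.drop_take_append_drop s (I+1) (J - (I+1))
      rw [show I + 1 + (J - (I+1)) = J by omega] at h6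
      exact h6.symm
    calc s = s.take I ++ s.drop I := (List.take_append_drop I s).symm
    _ = s.take I ++ s[I] :: s.drop (I+1) := by rw [List.drop_eq_getElem_cons hIlt]
    _ = s.take I ++ 1 :: ((s.drop (I+1)).take (J - (I+1)) ++ s.drop J) := by rw [hsI, ← e]
    _ = s.take I ++ 1 :: ((s.drop (I+1)).take (J - (I+1)) ++ (-1) :: s.drop (J+1)) := by
        rw [List.drop_eq_getElem_cons (show J < s.length from hJlt), hsJ]
  have hlp : (s.take I).length = I := by simp; omega
  have hlQ : ((s.drop (I+1)).take (J - (I+1))).length = J - (I+1) := by simp; omega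
  have hPsum : (s.take I).sum = 0 := hI0
  -- psum of Q
  have hQpsum : ∀ j, j ≤ J - (I+1) →
      psumL ((s.drop (I+1)).take (J - (I+1))) j = psumL s (I + 1 + j) - 1 := by
    intro j hj
    have h2 := psum_fact2 (s.take I) ((s.drop (I+1)).take (J - (I+1))) (s.drop (J+1))
      (j := j) (by omega)
    rw [← heq, hlp, hPsum] at h2
    omega
  have hQsum : ((s.drop (I+1)).take (J - (I+1))).sum = 0 := by
    have h2 := hQpsum (J - (I+1)) (le_refl _)
    rw [psumL_eq_sum _ (le_of_eq hlQ),
      show I + 1 + (J - (I+1)) = J by omega, hJ1] at h2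
    omega
  have hQdy : ∀ j, 0 ≤ psumL ((s.drop (I+1)).take (J - (I+1))) j := by
    intro j
    rcases le_or_gt j (J - (I+1)) with hj | hj
    · rw [hQpsum j hj]
      have := claim (I + 1 + j) (by omega) (by omega)
      omega
    · rw [psumL_eq_sum _ (by omega), hQsum]
  -- psum of r
  have hrpsum : ∀ m, psumL (s.drop (J+1)) m = psumL s (J + 1 + m) := by
    intro m
    have h3 := psum_fact3 (s.take I) ((s.drop (I+1)).take (J - (I+1))) (s.drop (J+1)) m
    rw [← heq, hlp, hlQ, hPsum, hQsum,
      show I + (J - (I+1)) + 2 + m = J + 1 + m by omega] at h3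
    omega
  have hrneg : ∀ m, psumL (s.drop (J+1)) m ≤ 0 := by
    intro m
    rw [hrpsum m]
    exact hgt' (J + 1 + m) (by omega)
  have hrsum : (s.drop (J+1)).sum = 0 := by
    have := hrpsum (s.drop (J+1)).length
    rw [psumL_eq_sum _ (le_refl _), psumL_eq_sum s (by simp; omega), h0] at this
    omega
  refine ⟨s.take I, (s.drop (I+1)).take (J - (I+1)), s.drop (J+1),
    fun a ha => hs a (List.mem_of_mem_take ha), hPsum,
    ⟨fun a ha => hs a (List.mem_of_mem_drop (List.mem_of_mem_take ha)), hQsum, hQdy⟩,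
    ⟨fun a ha => hs a (List.mem_of_mem_drop ha), hrsum, hrneg⟩, heq⟩

lemma negL_negL (s : List ℤ) : negL (negL s) = s := by simp [negL]

lemma length_negL (s : List ℤ) : (negL s).length = s.length := by simp [negL]

lemma sum_negL (s : List ℤ) : (negL s).sum = -s.sum := by
  induction s with
  | nil => simp [negL]
  | cons x t ih => simp [negL] at ih ⊢; omega

lemma psumL_negL (s : List ℤ) (i : ℕ) : psumL (negL s) i = - psumL s i := by
  have h : (negL s).take i = negL (s.take i) := by simp [negL, List.map_take]
  show ((negL s).take i).sum = -(s.take i).sum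
  rw [h]
  exact sum_negL (s.take i)

lemma stepseq_negL {s : List ℤ} (h : IsStepSeq s) : IsStepSeq (negL s) := by
  intro a ha
  simp only [negL, List.mem_map] at ha
  obtain ⟨b, hb, rfl⟩ := ha
  rcases h b hb with h1 | h1 <;> simp [h1]

lemma dyck_negL {s : List ℤ} (h : IsNegDyck s) : IsDyck (negL s) :=
  ⟨stepseq_negL h.1, by rw [sum_negL, h.2.1]; ring,
    fun p => by rw [psumL_negL]; have := h.2.2 p; omega⟩

lemma negdyck_negL {s : List ℤ} (h : IsDyck s) : IsNegDyck (negL s) :=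
  ⟨stepseq_negL h.1, by rw [sum_negL, h.2.1]; ring,
    fun p => by rw [psumL_negL]; have := h.2.2 p; omega⟩

lemma psi_eq (p Q r : List ℤ) (hps : p.sum = 0) (hQ : IsDyck Q) (hr : IsNegDyck r) :
    psi (p ++ (-1) :: (r ++ 1 :: Q)) = p ++ 1 :: (Q ++ (-1) :: r) := by
  unfold psi
  have h1 : negL (p ++ (-1) :: (r ++ 1 :: Q)) = negL p ++ 1 :: (negL r ++ (-1) :: negL Q) := by
    simp [negL]
  rw [h1, phi_eq (negL p) (negL r) (negL Q) (by rw [sum_negL, hps]; ring)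
    (dyck_negL hr) (negdyck_negL hQ)]
  have h2 : negL (negL p ++ (-1) :: (negL Q ++ 1 :: negL r))
      = p ++ 1 :: (Q ++ (-1) :: r) := by
    simp [negL]
  exact h2

lemma count_S (p Q r : List ℤ) (hps : p.sum = 0) (hQ : IsDyck Q) (hr : IsNegDyck r) :
    belowCountL (p ++ 1 :: (Q ++ (-1) :: r)) = bC 0 p + r.length := by
  rw [belowCountL_eq, bC_append, hps, add_zero]
  have h1 : bC 0 (1 :: (Q ++ (-1) :: r)) = r.length := by
    rw [bC, if_neg (by norm_num), bC_append, hQ.2.1]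
    rw [bC_of_nonneg Q (0+1) (fun i => by have := hQ.2.2 i; omega)]
    rw [show (0:ℤ) + 1 + 0 = 1 by ring, bC, if_neg (by norm_num)]
    rw [show (1:ℤ) + -1 = 0 by ring,
      bC_of_nonpos r 0 hr.1 (fun i => by have := hr.2.2 i; omega)]
    omega
  rw [h1]

lemma count_T (p Q r : List ℤ) (hps : p.sum = 0) (hQ : IsDyck Q) (hr : IsNegDyck r) :
    belowCountL (p ++ (-1) :: (r ++ 1 :: Q)) = bC 0 p + r.length + 2 := by
  rw [belowCountL_eq, bC_append, hps, add_zero]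
  have h1 : bC 0 ((-1) :: (r ++ 1 :: Q)) = r.length + 2 := by
    rw [bC, if_pos (by norm_num), bC_append, hr.2.1]
    rw [bC_of_nonpos r (0 + -1) hr.1 (fun i => by have := hr.2.2 i; omega)]
    rw [show (0:ℤ) + -1 + 0 = -1 by ring, bC, if_pos (by norm_num)]
    rw [show (-1:ℤ) + 1 = 0 by ring,
      bC_of_nonneg Q 0 (fun i => by have := hQ.2.2 i; omega)]
    omega
  rw [h1]
  omega

lemma stepseq_S {p Q r : List ℤ} (hp : IsStepSeq p) (hQ : IsStepSeq Q) (hr : IsStepSeq r) :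
    IsStepSeq (p ++ 1 :: (Q ++ (-1) :: r)) := by
  intro a ha
  simp only [List.mem_append, List.mem_cons] at ha
  rcases ha with h | h | h
  · exact hp a h
  · left; exact h
  · rcases h with h | h | h
    · exact hQ a h
    · right; exact h
    · exact hr a h

lemma stepseq_T {p Q r : List ℤ} (hp : IsStepSeq p) (hQ : IsStepSeq Q) (hr : IsStepSeq r) :
    IsStepSeq (p ++ (-1) :: (r ++ 1 :: Q)) := by
  intro a ha
  simp only [List.mem_append, List.mem_cons] at ha
  rcases ha with h | h | h
  · exact hp a h
  · right; exact h
  · rcases h with h | h | h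
    · exact hr a h
    · left; exact h
    · exact hQ a h

lemma factS (s : List ℤ) (hstep : IsStepSeq s) (hsum : s.sum = 0)
    (hlt : belowCountL s < s.length) :
    ∃ p Q r : List ℤ, IsStepSeq p ∧ p.sum = 0 ∧ IsDyck Q ∧ IsNegDyck r ∧
      s = p ++ 1 :: (Q ++ (-1) :: r) := by
  apply fact_exists s hstep hsum
  by_contra h
  push_neg at h
  have h2 : ∀ i, (0:ℤ) + psumL s i ≤ 0 := fun i => by have := h i; omega
  rw [belowCountL_eq, bC_of_nonpos s 0 hstep h2] at hlt
  omega

lemma factT (t : List ℤ) (hstep : IsStepSeq t) (hsum : t.sum = 0)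
    (hpos : 0 < belowCountL t) :
    ∃ p Q r : List ℤ, IsStepSeq p ∧ p.sum = 0 ∧ IsDyck Q ∧ IsNegDyck r ∧
      t = p ++ (-1) :: (r ++ 1 :: Q) := by
  have hex : ∃ i, 1 ≤ psumL (negL t) i := by
    by_contra h
    push_neg at h
    have h2 : ∀ i, (0:ℤ) ≤ 0 + psumL t i := by
      intro i
      have := h i
      rw [psumL_negL] at this
      omega
    rw [belowCountL_eq, bC_of_nonneg t 0 h2] at hpos
    omega
  obtain ⟨P, QQ, R, h1, h2, h3, h4, h5⟩ := fact_exists (negL t) (stepseq_negL hstep)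
    (by rw [sum_negL, hsum]; ring) hex
  refine ⟨negL P, negL R, negL QQ, stepseq_negL h1, by rw [sum_negL, h2]; ring,
    dyck_negL h4, negdyck_negL h3, ?_⟩
  have h6 := congrArg negL h5
  rw [negL_negL] at h6
  rw [h6]
  simp [negL]

end PhiAux

/-- The map φ₊ sending s = p·(u·Q·d)·r (with u·Q·d the last positive prime Dyck
subpath of s, p a path ending at height 0, and r a negative Dyck path) to
φ₊(s) = p·d·r·u·Q is a bijection from S_k onto S_{k+1}, for 0 ≤ k < n. -/
theorem phi_plus_bijection (n k : ℕ) (hk : k < n) :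
    ∃ φ : List ℤ → List ℤ,
      Set.BijOn φ {s | IsKNeg n k s} {s | IsKNeg n (k + 1) s} ∧
      ∀ p Q r : List ℤ, IsStepSeq p → p.sum = 0 → IsDyck Q → IsNegDyck r →
        IsKNeg n k (p ++ 1 :: (Q ++ (-1) :: r)) →
        φ (p ++ 1 :: (Q ++ (-1) :: r)) = p ++ (-1) :: (r ++ 1 :: Q) := by
  classical
  open PhiAux in
  refine ⟨PhiAux.phi, ?_, fun p Q r _ hps hQ hr _ => PhiAux.phi_eq p Q r hps hQ hr⟩
  have hMf : Set.MapsTo PhiAux.phi {s | IsKNeg n k s} {s | IsKNeg n (k+1) s} := by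
    intro s hsk
    obtain ⟨h1, h2, h3, h4⟩ := hsk
    obtain ⟨p, Q, r, hp, hps, hQ, hr, heq⟩ := PhiAux.factS s h1 h3 (by rw [h2, h4]; omega)
    rw [Set.mem_setOf_eq, heq, PhiAux.phi_eq p Q r hps hQ hr]
    rw [heq] at h2 h4
    rw [PhiAux.count_S p Q r hps hQ hr] at h4
    rw [PhiAux.length_fact] at h2
    refine ⟨PhiAux.stepseq_T hp hQ.1 hr.1, ?_, ?_, ?_⟩
    · simp; omega
    · simp [hps, hQ.2.1, hr.2.1]
    · rw [PhiAux.count_T p Q r hps hQ hr]; omega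
  have hMg : Set.MapsTo PhiAux.psi {s | IsKNeg n (k+1) s} {s | IsKNeg n k s} := by
    intro t htk
    obtain ⟨h1, h2, h3, h4⟩ := htk
    obtain ⟨p, Q, r, hp, hps, hQ, hr, heq⟩ := PhiAux.factT t h1 h3 (by rw [h4]; omega)
    rw [Set.mem_setOf_eq, heq, PhiAux.psi_eq p Q r hps hQ hr]
    rw [heq] at h2 h4
    rw [PhiAux.count_T p Q r hps hQ hr] at h4
    refine ⟨PhiAux.stepseq_S hp hQ.1 hr.1, ?_, ?_, ?_⟩
    · rw [PhiAux.length_fact]; simp at h2 ⊢; omega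
    · simp [hps, hQ.2.1, hr.2.1]
    · rw [PhiAux.count_S p Q r hps hQ hr]; omega
  have hInv : Set.InvOn PhiAux.psi PhiAux.phi {s | IsKNeg n k s} {s | IsKNeg n (k+1) s} := by
    constructor
    · intro s hsk
      obtain ⟨h1, h2, h3, h4⟩ := hsk
      obtain ⟨p, Q, r, hp, hps, hQ, hr, heq⟩ := PhiAux.factS s h1 h3 (by rw [h2, h4]; omega)
      rw [heq, PhiAux.phi_eq p Q r hps hQ hr, PhiAux.psi_eq p Q r hps hQ hr]
    · intro t htk
      obtain ⟨h1, h2, h3, h4⟩ := htk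
      obtain ⟨p, Q, r, hp, hps, hQ, hr, heq⟩ := PhiAux.factT t h1 h3 (by rw [h4]; omega)
      rw [heq, PhiAux.psi_eq p Q r hps hQ hr, PhiAux.phi_eq p Q r hps hQ hr]
  exact hInv.bijOn hMf hMg
end

section
/- As bivariate formal power series, 1/(1 − x·c(x) − t·x·c(t·x)) = Σ_{n≥0} ((1 − t^{n+1})/(1 − t)) C_n x^n = Σ_{n≥0} C_n (Σ_{k=0}^n t^k) x^n, where c is the Catalan generating function. -/
open PowerSeries

/-- c(x) = Σ C_n xⁿ, viewed in ℤ[[t]][[x]] (outer variable x, inner variable t). -/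
noncomputable def cx : PowerSeries (PowerSeries ℤ) :=
  PowerSeries.mk fun n => ((catalan n : ℤ) : PowerSeries ℤ)

/-- c(tx) = Σ C_n tⁿ xⁿ in ℤ[[t]][[x]]. -/
noncomputable def ctx : PowerSeries (PowerSeries ℤ) :=
  PowerSeries.mk fun n => ((catalan n : ℤ) : PowerSeries ℤ) * PowerSeries.X ^ n

/-- The variable t, as a constant (in x) power series. -/
noncomputable def tvar : PowerSeries (PowerSeries ℤ) :=
  PowerSeries.C PowerSeries.X

/-!
Let `S` be the series on the right and `c_t(x) = c(tx)`. Coefficientwise, `(1 - t) S = c - t c_t`,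
since `(1 - t)(1 + ⋯ + tⁿ) = 1 - t^(n+1)`. Both `c` and `c_t` satisfy the Catalan equation (the latter
with `x` replaced by `tx`), and in `(1 - x c - t x c_t)(c - t c_t)` the cross terms cancel, leaving
`(c - x c²) - t (c_t - t x c_t²) = 1 - t`. Cancelling `1 - t` in the domain `ℤ[[t]][[x]]` finishes.
-/

namespace PowerSeries

variable {R : Type*} [CommRing R]

theorem mul_sub_rescale_of_sq_mul_X_add_one {c : R⟦X⟧} (hc : c ^ 2 * X + 1 = c) (a : R) :
    (1 - X * c - C a * X * rescale a c) * (c - C a * rescale a c) = C (1 - a) := by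
  have hca : (rescale a c) ^ 2 * (C a * X) + 1 = rescale a c := by
    simpa [rescale_X] using congrArg (rescale a) hc
  rw [map_sub, map_one]
  linear_combination (-1 : R⟦X⟧) * hc + C a * hca

theorem C_one_sub_mul_mk_mul_geom_sum (f : ℕ → R) (a : R) :
    C (1 - a) * mk (fun n => f n * ∑ k ∈ Finset.range (n + 1), a ^ k) =
      mk f - C a * rescale a (mk f) := by
  ext n
  rw [coeff_C_mul, coeff_mk, map_sub, coeff_mk, coeff_C_mul, coeff_rescale, coeff_mk]
  linear_combination f n * mul_neg_geom_sum a (n + 1)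

end PowerSeries

theorem cx_sq_mul_X_add_one : cx ^ 2 * X + 1 = cx := by
  have hcx : cx = map (Nat.castRingHom _) catalanSeries := by
    ext n
    simp [cx, catalanSeries_coeff]
  simpa [hcx] using congrArg (map (Nat.castRingHom (PowerSeries ℤ))) catalanSeries_sq_mul_X_add_one

theorem ctx_eq_rescale : ctx = rescale X cx := by
  ext n
  simp [ctx, cx, coeff_rescale, mul_comm]

/-- 1/(1 − x·c(x) − t·x·c(tx)) = Σ_n C_n (Σ_{k=0}^n tᵏ) xⁿ
  (= Σ_n ((1−t^{n+1})/(1−t)) C_n xⁿ). -/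
theorem bivariate_gf_identity :
    (1 - PowerSeries.X * cx - tvar * PowerSeries.X * ctx) *
      (PowerSeries.mk fun n =>
        ((catalan n : ℤ) : PowerSeries ℤ) *
          ∑ k ∈ Finset.range (n + 1), PowerSeries.X ^ k) = 1 ∧
    ∀ n : ℕ, (1 - PowerSeries.X) *
        (∑ k ∈ Finset.range (n + 1), (PowerSeries.X : PowerSeries ℤ) ^ k) =
      1 - PowerSeries.X ^ (n + 1) := by
  refine ⟨?_, fun n => mul_neg_geom_sum X (n + 1)⟩
  have hC_one_sub_X : C (1 - X : PowerSeries ℤ) ≠ 0 := by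
    rw [Ne, map_eq_zero_iff _ C_injective, sub_eq_zero]
    exact fun h => by simpa using congrArg constantCoeff h
  apply mul_left_cancel₀ hC_one_sub_X
  rw [mul_left_comm, C_one_sub_mul_mk_mul_geom_sum, mul_one, tvar, ctx_eq_rescale]
  exact mul_sub_rescale_of_sq_mul_X_add_one cx_sq_mul_X_add_one X
end

section
/- (Cycle Lemma for ±1 sequences, k=1) Given a sequence a_1,…,a_{2n+1} with each a_i ∈ {−1,1} and Σ a_i = 1, there is exactly one cyclic shift of the sequence all of whose nonempty partial sums are positive. -/
/-! Let `F m = a₀ + ⋯ + a_{m-1}` be the partial sums of the periodic extension of the sequence,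
so that `F (m + N) = F m + 1`, and the `j`-th shift has all partial sums positive exactly when
`F j < F (j + p)` for `1 ≤ p ≤ N`. The last index `j < N` at which `F` attains its minimum
on `[0, N)` has this property, since the values beyond `N` are shifted up by `1`. Two such
indices `x < y < x + N` are impossible: they would give `F x < F y < F (x + N) = F x + 1`. -/

open Finset

section Record

variable {F : ℕ → ℤ} {N : ℕ}

theorem exists_lt_forall_lt_add_of_add_period (hN : 0 < N) (hF : ∀ m, F (m + N) = F m + 1) :
    ∃ j < N, ∀ p, 1 ≤ p → p ≤ N → F j < F (j + p) := by
  obtain ⟨j₀, hj₀, hmin⟩ := (range N).exists_min_image F ⟨0, mem_range.2 hN⟩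
  obtain ⟨j, hj, hlast⟩ :=
    ((range N).filter (F · = F j₀)).exists_max_image id ⟨j₀, mem_filter.2 ⟨hj₀, rfl⟩⟩
  obtain ⟨hjN, hFj⟩ := mem_filter.1 hj
  rw [mem_range] at hjN
  have hFj_le : ∀ m < N, F j ≤ F m := fun m hm => hFj ▸ hmin m (mem_range.2 hm)
  refine ⟨j, hjN, fun p hp hpN => ?_⟩
  by_cases hjp : j + p < N
  · refine (hFj_le _ hjp).lt_of_ne fun heq => ?_
    have : j + p ≤ j := hlast (j + p) (mem_filter.2 ⟨mem_range.2 hjp, hFj ▸ heq.symm⟩)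
    omega
  · have hwrap : j + p = (j + p - N) + N := by omega
    rw [hwrap, hF]
    linarith [hFj_le (j + p - N) (by omega)]

theorem not_forall_lt_add_of_add_period (hF : ∀ m, F (m + N) = F m + 1) {x y : ℕ}
    (hxy : x < y) (hyx : y < x + N) (hx : ∀ p, 1 ≤ p → p ≤ N → F x < F (x + p))
    (hy : ∀ p, 1 ≤ p → p ≤ N → F y < F (y + p)) : False := by
  have hlt : F x < F y := by
    simpa [Nat.add_sub_cancel' hxy.le] using hx (y - x) (by omega) (by omega)
  have hgt : F y < F x + 1 := by
    simpa [← hF, show y + (x + N - y) = x + N by omega] using hy (x + N - y) (by omega) (by omega)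
  omega

theorem existsUnique_lt_forall_lt_add_of_add_period (hN : 0 < N)
    (hF : ∀ m, F (m + N) = F m + 1) :
    ∃! j, j < N ∧ ∀ p, 1 ≤ p → p ≤ N → F j < F (j + p) := by
  obtain ⟨j, hjN, hj⟩ := exists_lt_forall_lt_add_of_add_period hN hF
  refine ⟨j, ⟨hjN, hj⟩, fun k ⟨hkN, hk⟩ => ?_⟩
  rcases lt_trichotomy k j with hkj | rfl | hjk
  · exact (not_forall_lt_add_of_add_period hF hkj (by omega) hk hj).elim
  · rfl
  · exact (not_forall_lt_add_of_add_period hF hjk (by omega) hj hk).elim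

end Record

section PeriodicSum

variable {G : Type*} [AddCommGroup G] (a : ℕ → G) (N : ℕ)

theorem sum_range_add_period_mod (m : ℕ) :
    ∑ i ∈ range (m + N), a (i % N) = ∑ i ∈ range m, a (i % N) + ∑ i ∈ range N, a i := by
  rw [add_comm m, sum_range_add, add_comm]
  simp only [Nat.add_mod_left]
  congr 1
  exact sum_congr rfl fun i hi => by rw [Nat.mod_eq_of_lt (mem_range.1 hi)]

theorem sum_range_shift_mod (j p : ℕ) :
    ∑ i ∈ range p, a ((i + j) % N) =
      ∑ i ∈ range (j + p), a (i % N) - ∑ i ∈ range j, a (i % N) := by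
  rw [sum_range_add, add_sub_cancel_left]
  simp only [add_comm]

end PeriodicSum

theorem cycle_lemma_pm_one_general (n : ℕ) (a : ℕ → ℤ)
    (hsum : ∑ i ∈ Finset.range (2 * n + 1), a i = 1) :
    ∃! j : ℕ, j < 2 * n + 1 ∧
      ∀ p, 1 ≤ p → p ≤ 2 * n + 1 →
        0 < ∑ i ∈ Finset.range p, a ((i + j) % (2 * n + 1)) := by
  have hperiod : ∀ m, ∑ i ∈ range (m + (2 * n + 1)), a (i % (2 * n + 1)) =
      ∑ i ∈ range m, a (i % (2 * n + 1)) + 1 := fun m => by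
    rw [sum_range_add_period_mod, hsum]
  simpa only [sum_range_shift_mod, sub_pos] using
    existsUnique_lt_forall_lt_add_of_add_period (Nat.succ_pos _) hperiod

/-- **Cycle Lemma for ±1 sequences, k = 1**: given a_1,…,a_{2n+1} ∈ {−1,1} with
total sum 1, exactly one cyclic shift has all its nonempty partial sums positive. -/
theorem cycle_lemma_pm_one (n : ℕ) (a : ℕ → ℤ)
    (hval : ∀ i < 2 * n + 1, a i = 1 ∨ a i = -1)
    (hsum : ∑ i ∈ Finset.range (2 * n + 1), a i = 1) :
    ∃! j : ℕ, j < 2 * n + 1 ∧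
      ∀ p, 1 ≤ p → p ≤ 2 * n + 1 →
        0 < ∑ i ∈ Finset.range p, a ((i + j) % (2 * n + 1)) :=
  cycle_lemma_pm_one_general n a hsum
end

section
/- (Cycle Lemma, general k) Given a sequence a_1,…,a_m of integers with each a_i ≤ 1 and Σ_{i=1}^m a_i = k > 0, there are exactly k indices j ∈ {1,…,m} such that all nonempty partial sums of the j-th cyclic shift are positive. -/
open Finset

/-- **Cycle Lemma (general k)**: given integers a_1,…,a_m with each a_i ≤ 1 and
total sum k > 0, there are exactly k cyclic shifts all of whose nonempty partial
sums are positive. -/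
theorem cycle_lemma (m k : ℕ) (hk : 0 < k) (a : ℕ → ℤ)
    (hval : ∀ i < m, a i ≤ 1)
    (hsum : ∑ i ∈ Finset.range m, a i = (k : ℤ)) :
    ((Finset.range m).filter fun j =>
      ∀ p ≤ m, 1 ≤ p →
        0 < ∑ i ∈ Finset.range p, a ((i + j) % m)).card = k := by
  classical
  have hm : 0 < m := by
    rcases Nat.eq_zero_or_pos m with h | h
    · subst h; simp at hsum; omega
    · exact h
  set S : ℕ → ℤ := fun n => ∑ i ∈ range n, a (i % m) with hSdef
  have hstep : ∀ n, S (n + 1) = S n + a (n % m) := fun n => Finset.sum_range_succ _ n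
  have hstep1 : ∀ n, S (n + 1) ≤ S n + 1 := by
    intro n
    rw [hstep]
    have := hval (n % m) (Nat.mod_lt n hm)
    linarith
  have hper : ∀ n, S (n + m) = S n + k := by
    intro n
    induction n with
    | zero =>
      show S (0 + m) = S 0 + k
      rw [Nat.zero_add]
      have h0 : S 0 = 0 := by simp [hSdef]
      have : S m = ∑ i ∈ range m, a i := by
        apply Finset.sum_congr rfl
        intro i hi
        rw [Nat.mod_eq_of_lt (Finset.mem_range.mp hi)]
      rw [this, hsum, h0, zero_add]
    | succ n ih =>
      have : n + 1 + m = (n + m) + 1 := by omega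
      rw [this, hstep, ih, hstep]
      have : (n + m) % m = n % m := Nat.add_mod_right n m
      rw [this]; ring
  -- telescoping: partial sums of shifted sequence
  have hshift : ∀ j p, ∑ i ∈ range p, a ((i + j) % m) = S (j + p) - S j := by
    intro j p
    induction p with
    | zero => simp
    | succ p ih =>
      rw [Finset.sum_range_succ, ih]
      have : j + (p + 1) = (j + p) + 1 := by omega
      rw [this, hstep]
      have : (j + p) % m = (p + j) % m := by rw [Nat.add_comm]
      rw [this]; ring
  -- global minimum bound
  have hmod : ∀ n, S (n % m) ≤ S n := by
    intro n
    induction n using Nat.strong_induction_on with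
    | _ n ih =>
      rcases Nat.lt_or_ge n m with h | h
      · rw [Nat.mod_eq_of_lt h]
      · have hn : (n - m) + m = n := by omega
        have h1 : S n = S (n - m) + k := by
          have := hper (n - m); rw [hn] at this; omega
        have h2 : (n - m) % m = n % m := by
          conv_rhs => rw [← hn]
          rw [Nat.add_mod_right]
        have h3 : S ((n - m) % m) ≤ S (n - m) := ih (n - m) (by omega)
        rw [h2] at h3
        have : (0 : ℤ) ≤ k := by positivity
        linarith
  -- the minimum value M and its last occurrence n0
  obtain ⟨M, hM⟩ : ∃ M, M ∈ ((range m).image S) ∧ ∀ v ∈ (range m).image S, M ≤ v := by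
    have hne : ((range m).image S).Nonempty := by
      apply Finset.Nonempty.image
      exact Finset.nonempty_range_iff.mpr (by omega)
    exact ⟨((range m).image S).min' hne, Finset.min'_mem _ hne, fun v hv => Finset.min'_le _ v hv⟩
  have hMle : ∀ q, M ≤ S q := by
    intro q
    have h1 : S (q % m) ∈ (range m).image S :=
      Finset.mem_image_of_mem S (Finset.mem_range.mpr (Nat.mod_lt q hm))
    exact le_trans (hM.2 _ h1) (hmod q)
  set T : Finset ℕ := (range m).filter (fun q => S q = M) with hTdef
  have hTne : T.Nonempty := by
    obtain ⟨j, hj, hjS⟩ := Finset.mem_image.mp hM.1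
    exact ⟨j, Finset.mem_filter.mpr ⟨hj, hjS⟩⟩
  set n0 : ℕ := T.max' hTne with hn0def
  have hn0m : n0 < m := by
    have := Finset.max'_mem T hTne
    exact Finset.mem_range.mp (Finset.mem_filter.mp this).1
  have hn0S : S n0 = M := (Finset.mem_filter.mp (Finset.max'_mem T hTne)).2
  have hn0last : ∀ q, n0 < q → q < m → M < S q := by
    intro q hq hqm
    rcases lt_or_eq_of_le (hMle q) with h | h
    · exact h
    · exfalso
      have : q ∈ T := Finset.mem_filter.mpr ⟨Finset.mem_range.mpr hqm, h.symm⟩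
      have := Finset.le_max' T q this
      omega
  -- bounded ascent implies full ascent
  have hAB : ∀ j, (∀ p, j < p → p ≤ j + m → S j < S p) → ∀ p, j < p → S j < S p := by
    intro j hB p
    induction p using Nat.strong_induction_on with
    | _ p ih =>
      intro hp
      rcases le_or_gt p (j + m) with h | h
      · exact hB p hp h
      · have hpm : (p - m) + m = p := by omega
        have h1 : S p = S (p - m) + k := by
          have := hper (p - m); rw [hpm] at this; omega
        have h2 : S j < S (p - m) := ih (p - m) (by omega) (by omega)
        have : (0 : ℤ) ≤ k := by positivity
        linarith
  -- Asc is m-periodic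
  have hAper : ∀ n, (∀ p, n < p → S n < S p) ↔ (∀ p, n + m < p → S (n + m) < S p) := by
    intro n
    constructor
    · intro h p hp
      have hpm : (p - m) + m = p := by omega
      have h1 : S p = S (p - m) + k := by
        have := hper (p - m); rw [hpm] at this; omega
      have h2 : S n < S (p - m) := h (p - m) (by omega)
      rw [hper, h1]; linarith
    · intro h p hp
      have h1 : S (n + m) < S (p + m) := h (p + m) (by omega)
      rw [hper, hper] at h1
      linarith
  -- window counting function
  set F : ℕ → Finset ℕ := fun t => (Ico t (t + m)).filter (fun j => ∀ p, j < p → S j < S p)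
    with hFdef
  have hFshift : ∀ t, (F (t + 1)).card = (F t).card := by
    intro t
    have h1 : Ico t (t + m) = insert t (Ico (t + 1) (t + m)) := by
      ext x; simp only [Finset.mem_Ico, Finset.mem_insert]; omega
    have h2 : Ico (t + 1) (t + 1 + m) = insert (t + m) (Ico (t + 1) (t + m)) := by
      ext x; simp only [Finset.mem_Ico, Finset.mem_insert]; omega
    have ht : t ∉ Ico (t + 1) (t + m) := by simp
    have htm : t + m ∉ Ico (t + 1) (t + m) := by simp
    rw [hFdef]
    simp only
    rw [h1, h2, Finset.filter_insert, Finset.filter_insert]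
    by_cases hA : ∀ p, t < p → S t < S p
    · have hA' : ∀ p, t + m < p → S (t + m) < S p := (hAper t).mp hA
      rw [if_pos hA, if_pos hA',
        Finset.card_insert_of_notMem (fun h => ht (Finset.filter_subset _ _ h)),
        Finset.card_insert_of_notMem (fun h => htm (Finset.filter_subset _ _ h))]
    · have hA' : ¬ ∀ p, t + m < p → S (t + m) < S p := fun h => hA ((hAper t).mpr h)
      rw [if_neg hA, if_neg hA']
  have hFconst : ∀ t, (F t).card = (F 0).card := by
    intro t
    induction t with
    | zero => rfl
    | succ t ih => rw [hFshift t, ih]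
  -- count in window starting at n0 via bijection with Ico M (M+k)
  have hn0Asc : ∀ p, n0 < p → S n0 < S p := by
    apply hAB
    intro p hp hpm
    rcases Nat.lt_or_ge p m with h | h
    · rw [hn0S]; exact hn0last p hp h
    · have hpm' : (p - m) + m = p := by omega
      have h1 : S p = S (p - m) + k := by
        have := hper (p - m); rw [hpm'] at this; omega
      have h2 : M ≤ S (p - m) := hMle _
      have : (1 : ℤ) ≤ k := by exact_mod_cast hk
      rw [hn0S]; linarith
  have hcount : (F n0).card = k := by
    have hbij : (F n0).card = (Finset.Ico M (M + k)).card := by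
      apply Finset.card_bij (fun j _ => S j)
      · -- maps into
        intro j hj
        rw [hFdef] at hj
        simp only [Finset.mem_filter, Finset.mem_Ico] at hj
        obtain ⟨⟨hj1, hj2⟩, hjA⟩ := hj
        rw [Finset.mem_Ico]
        constructor
        · exact hMle j
        · have h1 : S j < S (n0 + m) := hjA (n0 + m) (by omega)
          rw [hper, hn0S] at h1
          exact h1
      · -- injective
        intro j hj j' hj' hSS
        rw [hFdef] at hj hj'
        simp only [Finset.mem_filter, Finset.mem_Ico] at hj hj'
        by_contra hne
        rcases Nat.lt_or_ge j j' with h | h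
        · have := hj.2 j' h; linarith
        · have hlt : j' < j := by omega
          have := hj'.2 j hlt; linarith
      · -- surjective
        intro v hv
        rw [Finset.mem_Ico] at hv
        set U : Finset ℕ := (Ico n0 (n0 + m)).filter (fun p => S p ≤ v) with hUdef
        have hUne : U.Nonempty := by
          refine ⟨n0, Finset.mem_filter.mpr ⟨Finset.mem_Ico.mpr ⟨le_refl _, by omega⟩, ?_⟩⟩
          rw [hn0S]; exact hv.1
        set J : ℕ := U.max' hUne with hJdef
        have hJmem : J ∈ (Ico n0 (n0 + m)).filter (fun p => S p ≤ v) :=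
          Finset.max'_mem U hUne
        rw [Finset.mem_filter, Finset.mem_Ico] at hJmem
        obtain ⟨⟨hJ1, hJ2⟩, hJv⟩ := hJmem
        have hJmax : ∀ p, J < p → p < n0 + m → v < S p := by
          intro p hp hpm
          by_contra h
          push_neg at h
          have : p ∈ U := Finset.mem_filter.mpr ⟨Finset.mem_Ico.mpr ⟨by omega, hpm⟩, h⟩
          have := Finset.le_max' U p this
          omega
        have hk1 : (1 : ℤ) ≤ k := by exact_mod_cast hk
        have hSJ1 : v < S (J + 1) := by
          rcases Nat.lt_or_ge (J + 1) (n0 + m) with h | h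
          · exact hJmax (J + 1) (by omega) h
          · have : J + 1 = n0 + m := by omega
            rw [this, hper, hn0S]
            linarith [hv.2]
        have hSJ : S J = v := by
          have := hstep1 J
          omega
        have hJA : ∀ p, J < p → S J < S p := by
          apply hAB
          intro p hp hpm
          rcases Nat.lt_or_ge p (n0 + m) with h | h
          · rw [hSJ]; exact hJmax p hp h
          · have hpm' : (p - m) + m = p := by omega
            have h1 : S p = S (p - m) + k := by
              have := hper (p - m); rw [hpm'] at this; omega
            have h2 : M ≤ S (p - m) := hMle _
            rw [hSJ]
            linarith [hv.2]
        refine ⟨J, ?_, hSJ⟩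
        rw [hFdef]
        simp only [Finset.mem_filter, Finset.mem_Ico]
        exact ⟨⟨hJ1, hJ2⟩, hJA⟩
    rw [hbij, Int.card_Ico]
    simp
  -- assemble
  have hset : ((Finset.range m).filter fun j =>
      ∀ p ≤ m, 1 ≤ p →
        0 < ∑ i ∈ Finset.range p, a ((i + j) % m)) = F 0 := by
    ext j
    rw [hFdef]
    simp only [Finset.mem_filter, Finset.mem_range, Finset.mem_Ico]
    constructor
    · rintro ⟨hjm, hP⟩
      refine ⟨⟨Nat.zero_le _, by omega⟩, ?_⟩
      apply hAB
      intro p hp hpm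
      have h1 := hP (p - j) (by omega) (by omega)
      rw [hshift] at h1
      have : j + (p - j) = p := by omega
      rw [this] at h1
      linarith
    · rintro ⟨⟨_, hjm⟩, hA⟩
      refine ⟨by omega, ?_⟩
      intro p hpm hp1
      rw [hshift]
      have := hA (j + p) (by omega)
      linarith
  rw [hset, ← hFconst n0, hcount]
end

section
/- Let a_1,…,a_m ∈ {−1,1} with Σ a_i = 1, let s(p) = Σ_{i=1}^p a_i, and define the total order ⊲ on {0,1,…,m} by p ⊲ q iff s(p) < s(q), or s(p) = s(q) and p > q. Let m_i be the (i+1)-st smallest element in this order. Then for each i, the m_i-th cyclic shift of the sequence has exactly i+1 prefix positions p ∈ {0,…,m} with nonpositive partial sum, namely p = m_0, m_1, …, m_i (positions measured as s^{m_i}(p) = s(p)−s(m_i) if p ≥ m_i, and s(p)−s(m_i)+1 if p < m_i). -/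
/-- s(p) = a_1 + ⋯ + a_p (0-indexed: sum of the first p terms). -/
def psums (a : ℕ → ℤ) (p : ℕ) : ℤ := ∑ i ∈ Finset.range p, a i

/-- The partial sum at original position p of the cyclic shift starting after
position j, when the total sum is 1:
s^j(p) = s(p) − s(j) if j ≤ p, and s(p) − s(j) + 1 if p < j. -/
def shiftSum (a : ℕ → ℤ) (j p : ℕ) : ℤ :=
  if j ≤ p then psums a p - psums a j else psums a p - psums a j + 1

/-- The strict order ⊲ on positions: p ⊲ q iff s(p) < s(q), or s(p) = s(q) and p > q. -/
def triLT (a : ℕ → ℤ) (p q : ℕ) : Prop :=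
  psums a p < psums a q ∨ (psums a p = psums a q ∧ q < p)

instance (a : ℕ → ℤ) (p q : ℕ) : Decidable (triLT a p q) := by
  unfold triLT; infer_instance

lemma triLT_irrefl (a : ℕ → ℤ) (p : ℕ) : ¬ triLT a p p := by
  unfold triLT; omega

lemma triLT_total (a : ℕ → ℤ) (p q : ℕ) : triLT a p q ∨ p = q ∨ triLT a q p := by
  unfold triLT; omega

lemma triLT_trans (a : ℕ → ℤ) {p q r : ℕ} (h1 : triLT a p q) (h2 : triLT a q r) :
    triLT a p r := by
  unfold triLT at *; omega

/-- rank of x: number of positions strictly below x in ⊲ -/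
def rnk (a : ℕ → ℤ) (m x : ℕ) : ℕ :=
  ((Finset.range (m + 1)).filter fun q => triLT a q x).card

lemma rnk_lt (a : ℕ → ℤ) (m : ℕ) {p q : ℕ} (hp : p ≤ m) (h : triLT a p q) :
    rnk a m p < rnk a m q := by
  have hsub : insert p ((Finset.range (m + 1)).filter fun r => triLT a r p) ⊆
      (Finset.range (m + 1)).filter fun r => triLT a r q := by
    intro x hx
    rcases Finset.mem_insert.1 hx with rfl | hx
    · exact Finset.mem_filter.2 ⟨Finset.mem_range.2 (Nat.lt_succ_of_le hp), h⟩
    · rcases Finset.mem_filter.1 hx with ⟨h1, h2⟩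
      exact Finset.mem_filter.2 ⟨h1, triLT_trans a h2 h⟩
  have hnot : p ∉ (Finset.range (m + 1)).filter fun r => triLT a r p := by
    simp [triLT_irrefl]
  have hcard := Finset.card_le_card hsub
  rw [Finset.card_insert_of_notMem hnot] at hcard
  unfold rnk
  omega

lemma shift_iff (a : ℕ → ℤ) (j p : ℕ) : shiftSum a j p ≤ 0 ↔ ¬ triLT a j p := by
  unfold shiftSum triLT; split_ifs with h <;> omega

lemma not_triLT (a : ℕ → ℤ) (j p : ℕ) : ¬ triLT a j p ↔ triLT a p j ∨ p = j := by
  rcases eq_or_ne p j with rfl | h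
  · simp [triLT_irrefl]
  · unfold triLT; omega

/-- If m_i is the (i+1)-st smallest element of {0,…,m} in the order ⊲, then the
m_i-th cyclic shift has exactly i+1 prefix positions p ∈ {0,…,m} with nonpositive
partial sum, namely p = m_0, …, m_i. -/
theorem shift_nonpos_count (m : ℕ) (a : ℕ → ℤ)
    (hval : ∀ i < m, a i = 1 ∨ a i = -1)
    (hsum : psums a m = 1)
    (mseq : ℕ → ℕ)
    (hmem : ∀ i ≤ m, mseq i ≤ m)
    (henum : ∀ i ≤ m,
      ((Finset.range (m + 1)).filter fun q => triLT a q (mseq i)).card = i) :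
    ∀ i ≤ m,
      ((Finset.range (m + 1)).filter fun p => shiftSum a (mseq i) p ≤ 0).card = i + 1 ∧
      ∀ p ≤ m, (shiftSum a (mseq i) p ≤ 0 ↔ ∃ l ≤ i, p = mseq l) := by
  intro i hi
  have hji : mseq i ≤ m := hmem i hi
  have hri : rnk a m (mseq i) = i := henum i hi
  have hset : (Finset.range (m + 1)).filter (fun p => shiftSum a (mseq i) p ≤ 0) =
      insert (mseq i) ((Finset.range (m + 1)).filter fun q => triLT a q (mseq i)) := by
    ext p
    simp only [Finset.mem_filter, Finset.mem_insert, Finset.mem_range, shift_iff, not_triLT]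
    constructor
    · rintro ⟨hp, h | rfl⟩
      · exact Or.inr ⟨hp, h⟩
      · exact Or.inl rfl
    · rintro (rfl | ⟨hp, h⟩)
      · exact ⟨Nat.lt_succ_of_le hji, Or.inr rfl⟩
      · exact ⟨hp, Or.inl h⟩
  constructor
  · rw [hset, Finset.card_insert_of_notMem (by simp [triLT_irrefl]), henum i hi]
  · intro p hp
    rw [shift_iff, not_triLT]
    constructor
    · rintro (h | rfl)
      · have hr : rnk a m p < i := hri ▸ rnk_lt a m hp h
        refine ⟨rnk a m p, le_of_lt hr, ?_⟩
        have hle : rnk a m p ≤ m := le_trans (le_of_lt hr) hi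
        have h2 : rnk a m (mseq (rnk a m p)) = rnk a m p := henum _ hle
        rcases triLT_total a p (mseq (rnk a m p)) with ht | he | ht
        · have := rnk_lt a m hp ht; omega
        · exact he
        · have := rnk_lt a m (hmem _ hle) ht; omega
      · exact ⟨i, le_rfl, rfl⟩
    · rintro ⟨l, hl, rfl⟩
      have hli : l ≤ m := le_trans hl hi
      have hrl : rnk a m (mseq l) = l := henum l hli
      rcases triLT_total a (mseq l) (mseq i) with ht | he | ht
      · exact Or.inl ht
      · exact Or.inr he
      · have := rnk_lt a m hji ht; omega
end

section
/- The number of sequences of 2n+1 steps ±1 with total sum 1 that begin with +1 and have exactly k of their +1 steps starting at height ≤ 0 equals C_n, for each k = 0,1,…,n. -/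
open Finset

def stepSum (l : List Bool) : ℤ := (l.map stepVal).sum

@[simp] lemma stepSum_nil : stepSum [] = 0 := rfl

@[simp] lemma stepSum_cons (b : Bool) (l : List Bool) :
    stepSum (b :: l) = stepVal b + stepSum l := by
  simp [stepSum]

@[simp] lemma stepSum_append (l l' : List Bool) :
    stepSum (l ++ l') = stepSum l + stepSum l' := by
  simp [stepSum]

@[simp] lemma stepVal_not (b : Bool) : stepVal (!b) = -stepVal b := by
  cases b <;> rfl

@[simp] lemma stepSum_map_not (l : List Bool) : stepSum (l.map not) = -stepSum l := by
  induction l with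
  | nil => rfl
  | cons b l ih => simp [ih, add_comm]

lemma stepSum_eq_count_sub_count (l : List Bool) :
    stepSum l = l.count true - l.count false := by
  induction l with
  | nil => rfl
  | cons b l ih => cases b <;> simp [ih, stepVal] <;> ring

lemma two_mul_count_eq_length {l : List Bool} (hl : stepSum l = 0) (b : Bool) :
    2 * l.count b = l.length := by
  have := stepSum_eq_count_sub_count l
  have := List.count_true_add_count_false l
  cases b <;> omega

def upsBelow : ℤ → List Bool → ℕ
  | _, [] => 0
  | h, b :: l => (if b = true ∧ h < 0 then 1 else 0) + upsBelow (h + stepVal b) l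

@[simp] lemma upsBelow_nil (h : ℤ) : upsBelow h [] = 0 := rfl

lemma upsBelow_cons (h : ℤ) (b : Bool) (l : List Bool) :
    upsBelow h (b :: l) = (if b = true ∧ h < 0 then 1 else 0) + upsBelow (h + stepVal b) l :=
  rfl

lemma upsBelow_append (h : ℤ) (l l' : List Bool) :
    upsBelow h (l ++ l') = upsBelow h l + upsBelow (h + stepSum l) l' := by
  induction l generalizing h with
  | nil => simp
  | cons b l ih => simp [upsBelow_cons, ih, add_assoc]

lemma upsBelow_antitone (l : List Bool) : Antitone (upsBelow · l) := by
  induction l with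
  | nil => exact fun _ _ _ => le_rfl
  | cons b l ih =>
    intro h h' hh
    refine add_le_add ?_ (ih (by omega))
    cases b <;> simp only [Bool.false_eq_true, false_and, true_and, reduceIte, le_refl]
    split_ifs <;> omega

lemma upsBelow_le_count (h : ℤ) (l : List Bool) : upsBelow h l ≤ l.count true := by
  induction l generalizing h with
  | nil => rfl
  | cons b l ih =>
    have := ih (h + stepVal b)
    rw [upsBelow_cons, List.count_cons]
    cases b
    · simpa using this
    · simp only [true_and, BEq.rfl, reduceIte]
      split_ifs <;> omega

lemma upsBelow_pos {h : ℤ} {l : List Bool} (hh : h < 0) (hend : 0 ≤ h + stepSum l) :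
    0 < upsBelow h l := by
  induction l generalizing h with
  | nil => simp at hend; omega
  | cons b l ih =>
    rw [upsBelow_cons]
    cases b with
    | true => simp [hh]
    | false =>
      have := ih (h := h + stepVal false) (by simp [stepVal]; omega)
        (by simpa [add_assoc] using hend)
      omega

/-- By `upsBelow_pos`, `upsBelow h p = 0` and `h + stepSum p = 0` say that `p` runs from height
`h` to `0` without going below the axis; the `false` after it is the first passage below `0`. -/
lemma exists_eq_append_false {h : ℤ} {l : List Bool} (hh : 0 ≤ h) (hend : h + stepSum l < 0) :
    ∃ p q, l = p ++ false :: q ∧ h + stepSum p = 0 ∧ upsBelow h p = 0 := by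
  induction l generalizing h with
  | nil => simp at hend; omega
  | cons b l ih =>
    by_cases hb : b = false ∧ h = 0
    · obtain ⟨rfl, rfl⟩ := hb
      exact ⟨[], l, rfl, rfl, rfl⟩
    · obtain ⟨p, q, rfl, hp, hp0⟩ := ih (h := h + stepVal b)
        (by cases b <;> simp [stepVal] at hb ⊢ <;> omega) (by simpa [add_assoc] using hend)
      refine ⟨b :: p, q, rfl, by simpa [add_assoc] using hp, ?_⟩
      simp [upsBelow_cons, hp0, not_lt.2 hh]

lemma upsBelow_false_cons_pos {t : List Bool} (ht : stepSum (false :: t) = 0) :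
    0 < upsBelow 0 (false :: t) := by
  rw [upsBelow_cons]
  have := upsBelow_pos (h := 0 + stepVal false) (l := t) (by simp [stepVal])
    (by simp [stepVal] at ht ⊢; omega)
  omega

lemma eq_of_append_false_eq {h : ℤ} {p p' q q' : List Bool}
    (hp : h + stepSum p = 0) (hp0 : upsBelow h p = 0)
    (hp' : h + stepSum p' = 0) (hp0' : upsBelow h p' = 0)
    (heq : p ++ false :: q = p' ++ false :: q') : p = p' ∧ q = q' := by
  induction p generalizing h p' with
  | nil =>
    cases p' with
    | nil => simpa using heq
    | cons b t =>
      obtain ⟨rfl, -⟩ := List.cons.inj heq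
      obtain rfl : h = 0 := by simpa using hp
      exact absurd hp0' (upsBelow_false_cons_pos (by simpa using hp')).ne'
  | cons b t ih =>
    cases p' with
    | nil =>
      obtain ⟨rfl, -⟩ := List.cons.inj heq
      obtain rfl : h = 0 := by simpa using hp'
      exact absurd hp0 (upsBelow_false_cons_pos (by simpa using hp)).ne'
    | cons b' t' =>
      simp only [List.cons_append, List.cons.injEq] at heq
      obtain ⟨rfl, heq⟩ := heq
      rw [upsBelow_cons, Nat.add_eq_zero_iff] at hp0 hp0'
      obtain ⟨rfl, rfl⟩ := ih (h := h + stepVal b) (by simpa [add_assoc] using hp) hp0.2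
        (by simpa [add_assoc] using hp') hp0'.2 heq
      exact ⟨rfl, rfl⟩

/-- Reflecting a path that stays weakly above the axis puts it strictly below, where every
up-step counts. -/
lemma upsBelow_map_not {h : ℤ} {p : List Bool} (hp0 : upsBelow h p = 0)
    (hend : 0 ≤ h + stepSum p) : upsBelow (-h - 1) (p.map not) = p.count false := by
  induction p generalizing h with
  | nil => rfl
  | cons b t ih =>
    have hh : 0 ≤ h := not_lt.1 fun hneg => (upsBelow_pos hneg hend).ne' hp0
    rw [upsBelow_cons, Nat.add_eq_zero_iff] at hp0
    have hshift : -h - 1 + stepVal (!b) = -(h + stepVal b) - 1 := by rw [stepVal_not]; ring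
    rw [List.map_cons, upsBelow_cons, hshift,
      ih hp0.2 (by simpa [add_assoc] using hend), List.count_cons]
    cases b <;> simp [show -h < 1 by omega, add_comm]

lemma mem_image_ofFn {α : Type*} [Fintype α] [DecidableEq α] {m : ℕ} {l : List α} :
    l ∈ univ.image (List.ofFn (n := m)) ↔ l.length = m := by
  refine ⟨fun hl => ?_, fun hl => ?_⟩
  · obtain ⟨g, -, rfl⟩ := mem_image.1 hl
    exact List.length_ofFn
  · subst hl
    exact mem_image.2 ⟨fun i => l[i], mem_univ _, List.ofFn_getElem⟩

def bridges (n k : ℕ) : Finset (List Bool) :=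
  {l ∈ univ.image (List.ofFn (n := 2 * n)) | stepSum l = 0 ∧ upsBelow 0 l = k}

lemma mem_bridges {n k : ℕ} {l : List Bool} :
    l ∈ bridges n k ↔ l.length = 2 * n ∧ stepSum l = 0 ∧ upsBelow 0 l = k := by
  rw [bridges, mem_filter, mem_image_ofFn]

lemma bridges_eq_empty {n k : ℕ} (h : n < k) : bridges n k = ∅ := by
  refine eq_empty_of_forall_notMem fun l hl => ?_
  obtain ⟨hlen, hsum, rfl⟩ := mem_bridges.1 hl
  have := upsBelow_le_count 0 l
  have := two_mul_count_eq_length hsum true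
  omega

lemma semilength_eq {n n' k k' : ℕ} {l : List Bool} (hl : l ∈ bridges n k)
    (hl' : l ∈ bridges n' k') : n = n' := by
  have := (mem_bridges.1 hl).1.symm.trans (mem_bridges.1 hl').1
  omega

lemma bridges_zero_zero : bridges 0 0 = {[]} := by
  ext l
  rw [mem_bridges, mem_singleton]
  refine ⟨fun h => List.length_eq_zero_iff.1 h.1, ?_⟩
  rintro rfl
  exact ⟨rfl, rfl, rfl⟩

/-- Gluing a first excursion (with interior `p`, reflected for `downFirst`) and the rest `q`. -/
def upFirst (p q : List Bool) : List Bool := true :: p ++ false :: q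

def downFirst (p q : List Bool) : List Bool := false :: p.map not ++ true :: q

@[simp] lemma length_upFirst (p q : List Bool) :
    (upFirst p q).length = p.length + q.length + 2 := by
  simp [upFirst]; omega

@[simp] lemma length_downFirst (p q : List Bool) :
    (downFirst p q).length = p.length + q.length + 2 := by
  simp [downFirst]; omega

@[simp] lemma stepSum_upFirst (p q : List Bool) :
    stepSum (upFirst p q) = stepSum p + stepSum q := by
  simp [upFirst, stepVal]; ring

@[simp] lemma stepSum_downFirst (p q : List Bool) :
    stepSum (downFirst p q) = -stepSum p + stepSum q := by
  simp [downFirst, stepVal]; ring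

lemma downFirst_eq_map_not (p q : List Bool) :
    downFirst p q = (upFirst p (q.map not)).map not := by
  simp [upFirst, downFirst, Function.comp_def]

lemma upsBelow_upFirst {m : ℕ} {p : List Bool} (hp : p ∈ bridges m 0) (q : List Bool) :
    upsBelow 0 (upFirst p q) = upsBelow 0 q := by
  obtain ⟨-, hsum, hup⟩ := mem_bridges.1 hp
  have hup1 : upsBelow 1 p = 0 := Nat.le_zero.1 (hup ▸ upsBelow_antitone p zero_le_one)
  simp [upFirst, upsBelow_cons, upsBelow_append, hsum, hup1, stepVal]

lemma upsBelow_downFirst {m : ℕ} {p : List Bool} (hp : p ∈ bridges m 0) (q : List Bool) :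
    upsBelow 0 (downFirst p q) = m + 1 + upsBelow 0 q := by
  obtain ⟨hlen, hsum, hup⟩ := mem_bridges.1 hp
  have hcount : p.count false = m := by
    have := two_mul_count_eq_length hsum false
    omega
  have hdown : upsBelow (-1) (p.map not) = m := by
    simpa [hcount] using upsBelow_map_not (h := 0) hup (by simp [hsum])
  simp [downFirst, upsBelow_cons, upsBelow_append, hsum, hdown, stepVal, add_assoc]

lemma upFirst_mem_bridges_iff {m n k : ℕ} {p q : List Bool} (hp : p ∈ bridges m 0) :
    upFirst p q ∈ bridges (n + 1) k ↔ m ≤ n ∧ q ∈ bridges (n - m) k := by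
  obtain ⟨hlen, hsum, -⟩ := mem_bridges.1 hp
  simp only [mem_bridges, upsBelow_upFirst hp, length_upFirst, stepSum_upFirst, hlen, hsum]
  omega

lemma downFirst_mem_bridges_iff {m n k : ℕ} {p q : List Bool} (hp : p ∈ bridges m 0) :
    downFirst p q ∈ bridges (n + 1) k ↔
      m ≤ n ∧ m < k ∧ q ∈ bridges (n - m) (k - (m + 1)) := by
  obtain ⟨hlen, hsum, -⟩ := mem_bridges.1 hp
  simp only [mem_bridges, upsBelow_downFirst hp, length_downFirst, stepSum_downFirst, hlen, hsum]
  omega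

lemma upFirst_inj {m m' : ℕ} {p p' q q' : List Bool} (hp : p ∈ bridges m 0)
    (hp' : p' ∈ bridges m' 0) (h : upFirst p q = upFirst p' q') : p = p' ∧ q = q' := by
  obtain ⟨-, hsum, hup⟩ := mem_bridges.1 hp
  obtain ⟨-, hsum', hup'⟩ := mem_bridges.1 hp'
  simp only [upFirst, List.cons_append, List.cons.injEq, true_and] at h
  exact eq_of_append_false_eq (h := 0) (by simpa using hsum) hup (by simpa using hsum') hup' h

lemma downFirst_inj {m m' : ℕ} {p p' q q' : List Bool} (hp : p ∈ bridges m 0)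
    (hp' : p' ∈ bridges m' 0) (h : downFirst p q = downFirst p' q') : p = p' ∧ q = q' := by
  have hmap := List.map_injective_iff.2 Bool.not_injective
  rw [downFirst_eq_map_not, downFirst_eq_map_not] at h
  obtain ⟨rfl, hq⟩ := upFirst_inj hp hp' (hmap h)
  exact ⟨rfl, hmap hq⟩

lemma exists_eq_upFirst {r : List Bool} (hr : stepSum (true :: r) = 0) :
    ∃ p q, true :: r = upFirst p q ∧ p ∈ bridges (p.count true) 0 := by
  obtain ⟨p, q, rfl, hp, hp0⟩ := exists_eq_append_false (h := 0) (l := r) le_rfl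
    (by simp [stepVal] at hr; omega)
  rw [zero_add] at hp
  exact ⟨p, q, rfl, mem_bridges.2 ⟨(two_mul_count_eq_length hp true).symm, hp, hp0⟩⟩

lemma exists_eq_downFirst {r : List Bool} (hr : stepSum (false :: r) = 0) :
    ∃ p q, false :: r = downFirst p q ∧ p ∈ bridges (p.count true) 0 := by
  obtain ⟨p, q, h, hp⟩ := exists_eq_upFirst (r := r.map not)
    (by simp [stepVal] at hr ⊢; omega)
  refine ⟨p, q.map not, ?_, hp⟩
  simp [downFirst_eq_map_not, ← h, Function.comp_def]

lemma card_bridges_succ (n k : ℕ) :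
    #(bridges (n + 1) k) =
      ∑ m ∈ range (n + 1), #(bridges m 0) * #(bridges (n - m) k) +
        ∑ m ∈ range (n + 1) with m < k, #(bridges m 0) * #(bridges (n - m) (k - (m + 1))) := by
  set A := (range (n + 1)).sigma fun m => bridges m 0 ×ˢ bridges (n - m) k
  set B := {m ∈ range (n + 1) | m < k}.sigma fun m =>
    bridges m 0 ×ˢ bridges (n - m) (k - (m + 1))
  have hcard : #(A.disjSum B) = #(bridges (n + 1) k) := by
    refine card_bij (fun x _ => x.elim (fun a => upFirst a.2.1 a.2.2)
      (fun b => downFirst b.2.1 b.2.2)) ?_ ?_ ?_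
    · rintro (⟨m, p, q⟩ | ⟨m, p, q⟩) hx <;>
        simp only [A, B, inl_mem_disjSum, inr_mem_disjSum, mem_sigma, mem_product, mem_filter,
          mem_range, Sum.elim_inl, Sum.elim_inr] at hx ⊢
      · exact (upFirst_mem_bridges_iff hx.2.1).2 ⟨by omega, hx.2.2⟩
      · exact (downFirst_mem_bridges_iff hx.2.1).2 ⟨by omega, hx.1.2, hx.2.2⟩
    · rintro (⟨m, p, q⟩ | ⟨m, p, q⟩) hx (⟨m', p', q'⟩ | ⟨m', p', q'⟩) hx' h <;>
        simp only [A, B, inl_mem_disjSum, inr_mem_disjSum, mem_sigma, mem_product, Sum.elim_inl,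
          Sum.elim_inr] at hx hx' h
      · obtain ⟨rfl, rfl⟩ := upFirst_inj hx.2.1 hx'.2.1 h
        rw [semilength_eq hx.2.1 hx'.2.1]
      · simp [upFirst, downFirst] at h
      · simp [upFirst, downFirst] at h
      · obtain ⟨rfl, rfl⟩ := downFirst_inj hx.2.1 hx'.2.1 h
        rw [semilength_eq hx.2.1 hx'.2.1]
    · intro l hl
      obtain ⟨hlen, hsum, -⟩ := mem_bridges.1 hl
      obtain _ | ⟨_ | _, r⟩ := l
      · simp at hlen
      · obtain ⟨p, q, h, hp⟩ := exists_eq_downFirst hsum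
        rw [h] at hl ⊢
        obtain ⟨hm, hmk, hq⟩ := (downFirst_mem_bridges_iff hp).1 hl
        exact ⟨.inr ⟨p.count true, p, q⟩, by simp [B, hp, hq, hmk, hm], rfl⟩
      · obtain ⟨p, q, h, hp⟩ := exists_eq_upFirst hsum
        rw [h] at hl ⊢
        obtain ⟨hm, hq⟩ := (upFirst_mem_bridges_iff hp).1 hl
        exact ⟨.inl ⟨p.count true, p, q⟩, by simp [A, hp, hq, hm], rfl⟩
  rw [← hcard, card_disjSum, card_sigma, card_sigma]
  simp only [card_product]

/-- After reflecting `m ↦ n - m` in the first sum the conditions `k ≤ m` and `m < k` are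
complementary. -/
lemma catalan_succ_eq_sum_add_sum (n k : ℕ) :
    catalan (n + 1) =
      ∑ m ∈ range (n + 1), (if k ≤ n - m then catalan m * catalan (n - m) else 0) +
      ∑ m ∈ range (n + 1), (if m < k then catalan m * catalan (n - m) else 0) := by
  rw [← sum_range_reflect, ← sum_add_distrib, catalan_succ, Fin.sum_univ_eq_sum_range
    (fun i => catalan i * catalan (n - i))]
  refine sum_congr rfl fun m hm => ?_
  have hm : m ≤ n := Nat.lt_succ_iff.1 (mem_range.1 hm)
  rw [show n + 1 - 1 - m = n - m by omega, Nat.sub_sub_self hm, mul_comm]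
  split_ifs <;> omega

theorem card_bridges (n k : ℕ) : #(bridges n k) = if k ≤ n then catalan n else 0 := by
  induction n using Nat.strong_induction_on generalizing k with
  | _ n ih =>
  split_ifs with hk
  swap
  · rw [bridges_eq_empty (not_le.1 hk), card_empty]
  cases n with
  | zero => rw [Nat.le_zero.1 hk, bridges_zero_zero, card_singleton, catalan_zero]
  | succ n =>
    have hcat (m : ℕ) (hm : m ∈ range (n + 1)) : #(bridges m 0) = catalan m := by
      rw [ih m (by simpa [Nat.lt_succ_iff] using hm), if_pos (Nat.zero_le m)]
    rw [card_bridges_succ, catalan_succ_eq_sum_add_sum n k, sum_filter]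
    congr 1 <;> refine sum_congr rfl fun m hm => ?_ <;> rw [hcat m hm]
    · rw [ih (n - m) (by omega), mul_ite, mul_zero]
    · split_ifs with hmk
      · rw [ih (n - m) (by omega), if_pos (by omega)]
      · rfl

lemma psum_succ {m : ℕ} (f : Fin (m + 1) → Bool) (i : ℕ) :
    psum f (i + 1) = stepVal (f 0) + psum (Fin.tail f) i := by
  rw [psum, psum, List.ofFn_succ, List.take_succ_cons, List.map_cons, List.sum_cons]
  rfl

lemma psum_length {m : ℕ} (g : Fin m → Bool) : psum g m = stepSum (List.ofFn g) := by
  rw [psum, List.take_of_length_le (by simp)]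
  rfl

lemma upsBelow_ofFn {m : ℕ} (h : ℤ) (g : Fin m → Bool) :
    upsBelow h (List.ofFn g) = #{j | g j = true ∧ h + psum g j < 0} := by
  induction m generalizing h with
  | zero => simp
  | succ m ih =>
    rw [List.ofFn_succ, upsBelow_cons, Fin.card_filter_univ_succ', ih]
    simp [add_assoc, psum]

/-- After the initial up-step the path is one unit higher, so `psum f i ≤ 0` becomes `< 0`. -/
lemma card_upSteps_eq_upsBelow {m : ℕ} (f : Fin (m + 1) → Bool) (hf : f 0 = true) :
    #{i | 0 < i.1 ∧ f i = true ∧ psum f i.1 ≤ 0} = upsBelow 0 (List.ofFn (Fin.tail f)) := by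
  rw [upsBelow_ofFn, Fin.card_filter_univ_succ']
  simp only [Fin.val_zero, lt_self_iff_false, false_and, reduceIte, zero_add, Fin.val_succ,
    Nat.zero_lt_succ, true_and, psum_succ, hf, stepVal]
  refine congrArg card (filter_congr fun j _ => and_congr Iff.rfl ?_)
  omega

lemma card_shifted_eq_card_bridges (n k : ℕ) :
    ((Finset.univ : Finset (Fin (2 * n + 1) → Bool)).filter fun f =>
        f 0 = true ∧ psum f (2 * n + 1) = 1 ∧
        (Finset.univ.filter fun i : Fin (2 * n + 1) =>
          0 < i.1 ∧ f i = true ∧ psum f i.1 ≤ 0).card = k).card = #(bridges n k) := by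
  refine card_bij (fun f _ => List.ofFn (Fin.tail f)) ?_ ?_ ?_
  · intro f hf
    obtain ⟨hf0, hsum, hk⟩ := (mem_filter.1 hf).2
    rw [psum_succ, hf0, psum_length] at hsum
    rw [card_upSteps_eq_upsBelow f hf0] at hk
    exact mem_bridges.2 ⟨List.length_ofFn, by simp [stepVal] at hsum; omega, hk⟩
  · intro f hf f' hf' h
    rw [← Fin.cons_self_tail f, ← Fin.cons_self_tail f', (mem_filter.1 hf).2.1,
      (mem_filter.1 hf').2.1, List.ofFn_injective h]
  · intro l hl
    obtain ⟨g, -, rfl⟩ := mem_image.1 (mem_filter.1 hl).1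
    obtain ⟨-, hsum, hk⟩ := mem_bridges.1 hl
    refine ⟨Fin.cons true g, mem_filter.2 ⟨mem_univ _, rfl, ?_, ?_⟩, by rw [Fin.tail_cons]⟩
    · rw [psum_succ, Fin.tail_cons, psum_length, hsum]
      rfl
    · rw [card_upSteps_eq_upsBelow _ rfl, Fin.tail_cons, hk]

/-- The number of sequences of 2n+1 steps ±1 with total sum 1 that begin with an
up-step and have exactly k later up-steps starting at height ≤ 0 (equivalently,
after dropping the initial up-step, exactly k up-steps below the x-axis)
equals C_n, for each k = 0,1,…,n. -/
theorem shifted_paths_count (n k : ℕ) (hk : k ≤ n) :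
    ((Finset.univ : Finset (Fin (2 * n + 1) → Bool)).filter fun f =>
        f 0 = true ∧ psum f (2 * n + 1) = 1 ∧
        (Finset.univ.filter fun i : Fin (2 * n + 1) =>
          0 < i.1 ∧ f i = true ∧ psum f i.1 ≤ 0).card = k).card = catalan n := by
  rw [card_shifted_eq_card_bridges, card_bridges, if_pos hk]
end
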